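/- arXiv:1505.07308 — 9 statements merged into one kernel-verified Lean document; each statement's English description precedes it below -/
import Mathlib

section
/- Let Q be a finite (left) quasifield with q elements and let A ⊆ Q\{0} be a nonempty subset. If m = |A+A| and n = |A·A|, then |A|² ≤ m·n·|A|/q + q^{1/2}·√(m·n). -/
/-- A finite (left) quasifield. -/
class Quasifield (Q : Type*) extends AddCommGroup Q, Mul Q, One Q where
  one_ne_zero : (1 : Q) ≠ 0
  one_mul : ∀ a : Q, 1 * a = a
  mul_one : ∀ a : Q, a * 1 = a
  zero_mul : ∀ a : Q, 0 * a = 0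
  mul_zero : ∀ a : Q, a * 0 = 0
  mul_ne_zero : ∀ a b : Q, a ≠ 0 → b ≠ 0 → a * b ≠ 0
  existsUnique_mul_left : ∀ a b : Q, a ≠ 0 → b ≠ 0 → ∃! x : Q, a * x = b
  existsUnique_mul_right : ∀ a b : Q, a ≠ 0 → b ≠ 0 → ∃! y : Q, y * a = b
  left_distrib : ∀ a b c : Q, a * (b + c) = a * b + a * c
  existsUnique_affine : ∀ a b c : Q, a ≠ b → ∃! x : Q, a * x = b * x + c

/-- The kernel of a quasifield. -/
def Quasifield.kernel (Q : Type*) [Quasifield Q] : Set Q :=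
  {k | (∀ x y : Q, (x + y) * k = x * k + y * k) ∧ ∀ x y : Q, (x * y) * k = x * (y * k)}

open scoped Pointwise

/-!
The points of `P = (A·A) × (A+A)` and the lines `x = a·y + c` of the quasifield plane form a
configuration in which every point lies on `q` lines and two points on at most one line. Hence the
number `N(ℓ)` of points of `P` on a line `ℓ` has mean `|P|/q` over the `q²` lines and variance
sum `∑ (N(ℓ) - |P|/q)² ≤ q |P|`. The `|A|²` distinct lines `x = a·y - a·b` with `a, b ∈ A` each
contain the `|A|` points `(a·t, t + b)`, `t ∈ A`, so `|A|² (|A| - |P|/q)² ≤ q |P|` whenever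
`|A| ≥ |P|/q`; this is the estimate, since `|P| = m n`. When `|A| < |P|/q` it is trivial.
-/

namespace Quasifield

open Finset

variable {Q : Type*} [Quasifield Q]

protected theorem mul_neg (a b : Q) : a * -b = -(a * b) := by
  have h := left_distrib a b (-b)
  rw [add_neg_cancel, mul_zero] at h
  exact eq_neg_of_add_eq_zero_right h.symm

protected theorem mul_sub (a b c : Q) : a * (b - c) = a * b - a * c := by
  rw [sub_eq_add_neg, left_distrib, Quasifield.mul_neg, ← sub_eq_add_neg]

protected theorem mul_left_cancel₀ {a b c : Q} (ha : a ≠ 0) (h : a * b = a * c) : b = c := by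
  by_contra hbc
  exact mul_ne_zero a (b - c) ha (sub_ne_zero.mpr hbc) (by rw [Quasifield.mul_sub, h, sub_self])

/-- Both `0` and `c` solve `a·x = b·x + 0`, which has a unique solution when `a ≠ b`. -/
protected theorem mul_right_cancel₀ {a b c : Q} (hc : c ≠ 0) (h : a * c = b * c) : a = b := by
  by_contra hab
  obtain ⟨x, -, hx⟩ := existsUnique_affine a b 0 hab
  have hc' : c = x := hx c (h.trans (add_zero _).symm)
  have h0 : 0 = x := hx 0 (by simp only [mul_zero, add_zero])
  exact hc (hc'.trans h0.symm)

/-- The pair `s = (a, c)` encodes the line `x = a·y + c` of the plane `Q × Q`. -/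
abbrev OnLine (s p : Q × Q) : Prop := p.1 = s.1 * p.2 + s.2

section Incidences

variable [Fintype Q] [DecidableEq Q]

theorem card_lines_through (p : Q × Q) : #{s | OnLine s p} = Fintype.card Q := by
  have h : ({s | OnLine s p} : Finset (Q × Q)) = univ.image fun a => (a, p.1 - a * p.2) := by
    ext s
    simp only [mem_filter, mem_univ, true_and, mem_image]
    constructor
    · intro h
      exact ⟨s.1, by rw [h, add_sub_cancel_left]⟩
    · rintro ⟨a, rfl⟩
      exact (add_sub_cancel _ _).symm
  rw [h, card_image_of_injective _ fun a b hab => (Prod.mk.inj hab).1, card_univ]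

theorem card_lines_through_pair_le_one {p p' : Q × Q} (hpp' : p ≠ p') :
    #{s | OnLine s p ∧ OnLine s p'} ≤ 1 := by
  rw [card_le_one]
  have slope : ∀ s, OnLine s p ∧ OnLine s p' → s.1 * (p.2 - p'.2) = p.1 - p'.1 := by
    rintro s ⟨hs, hs'⟩
    rw [Quasifield.mul_sub, hs, hs']
    abel
  intro s hs t ht
  simp only [mem_filter, mem_univ, true_and] at hs ht
  have hd : p.2 - p'.2 ≠ 0 := by
    intro hd
    have h1 := slope s hs
    rw [hd, mul_zero, eq_comm, sub_eq_zero] at h1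
    exact hpp' (Prod.ext h1 (sub_eq_zero.mp hd))
  have h1 : s.1 = t.1 := Quasifield.mul_right_cancel₀ hd ((slope s hs).trans (slope t ht).symm)
  have h2 : s.2 = t.2 := by
    have h := hs.1.symm.trans ht.1
    rwa [h1, add_right_inj] at h
  exact Prod.ext h1 h2

theorem sum_card_pointsOn (P : Finset (Q × Q)) :
    ∑ s : Q × Q, #{p ∈ P | OnLine s p} = Fintype.card Q * #P := by
  simp_rw [card_filter]
  rw [sum_comm]
  simp_rw [← card_filter, card_lines_through, sum_const, smul_eq_mul, mul_comm]

theorem sum_card_pointsOn_sq_le (P : Finset (Q × Q)) :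
    ∑ s : Q × Q, #{p ∈ P | OnLine s p} ^ 2 ≤ Fintype.card Q * #P + #P ^ 2 := by
  have pairs : ∑ s : Q × Q, #{p ∈ P | OnLine s p} ^ 2
      = ∑ p ∈ P, ∑ p' ∈ P, #{s | OnLine s p ∧ OnLine s p'} := by
    simp_rw [sq, card_filter, sum_mul_sum, boole_mul, ← ite_and]
    rw [sum_comm]
    refine sum_congr rfl fun p _ => ?_
    rw [sum_comm]
  have row (p) (hp : p ∈ P) : ∑ p' ∈ P, #{s | OnLine s p ∧ OnLine s p'} ≤ Fintype.card Q + #P :=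
    calc _ ≤ ∑ p' ∈ P, ((if p = p' then Fintype.card Q else 0) + 1) := by
          refine sum_le_sum fun p' _ => ?_
          split_ifs with hpp'
          · subst hpp'
            simp_rw [and_self, card_lines_through]
            omega
          · exact (card_lines_through_pair_le_one hpp').trans (by omega)
      _ = Fintype.card Q + #P := by rw [sum_add_distrib, sum_ite_eq, if_pos hp, card_eq_sum_ones]
  calc _ ≤ ∑ p ∈ P, (Fintype.card Q + #P) := pairs ▸ sum_le_sum row
    _ = Fintype.card Q * #P + #P ^ 2 := by rw [sum_const, smul_eq_mul]; ring

theorem sum_sq_card_pointsOn_sub_le (P : Finset (Q × Q)) :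
    ∑ s : Q × Q, ((#{p ∈ P | OnLine s p} : ℝ) - #P / Fintype.card Q) ^ 2
      ≤ Fintype.card Q * #P := by
  have hq : (Fintype.card Q : ℝ) ≠ 0 := Nat.cast_ne_zero.mpr Fintype.card_ne_zero
  have h1 : ∑ s : Q × Q, (#{p ∈ P | OnLine s p} : ℝ) = Fintype.card Q * #P := by
    exact_mod_cast sum_card_pointsOn P
  have h2 : ∑ s : Q × Q, (#{p ∈ P | OnLine s p} : ℝ) ^ 2 ≤ Fintype.card Q * #P + #P ^ 2 := by
    exact_mod_cast sum_card_pointsOn_sq_le P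
  have hcard : (Fintype.card (Q × Q) : ℝ) = Fintype.card Q ^ 2 := by
    rw [Fintype.card_prod, Nat.cast_mul, sq]
  calc _ = ∑ s : Q × Q, (#{p ∈ P | OnLine s p} : ℝ) ^ 2
          - 2 * (∑ s : Q × Q, (#{p ∈ P | OnLine s p} : ℝ)) * (#P / Fintype.card Q)
          + Fintype.card (Q × Q) * (#P / Fintype.card Q) ^ 2 := by
        simp only [sub_sq, sum_add_distrib, sum_sub_distrib, ← sum_mul, ← mul_sum, sum_const,
          card_univ, nsmul_eq_mul]
    _ = ∑ s : Q × Q, (#{p ∈ P | OnLine s p} : ℝ) ^ 2 - #P ^ 2 := by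
        rw [h1, hcard]
        field_simp
        ring
    _ ≤ _ := by linarith

theorem card_mul_sq_sub_le_of_le_card_pointsOn (P L : Finset (Q × Q)) {k : ℝ}
    (hk : #P / Fintype.card Q ≤ k) (hL : ∀ s ∈ L, k ≤ #{p ∈ P | OnLine s p}) :
    #L * (k - #P / Fintype.card Q) ^ 2 ≤ Fintype.card Q * #P :=
  calc #L * (k - #P / Fintype.card Q) ^ 2 = ∑ _s ∈ L, (k - #P / Fintype.card Q) ^ 2 := by
        rw [sum_const, nsmul_eq_mul]
    _ ≤ ∑ s ∈ L, ((#{p ∈ P | OnLine s p} : ℝ) - #P / Fintype.card Q) ^ 2 :=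
        sum_le_sum fun s hs =>
          pow_le_pow_left₀ (sub_nonneg.mpr hk) (sub_le_sub_right (hL s hs) _) 2
    _ ≤ ∑ s : Q × Q, ((#{p ∈ P | OnLine s p} : ℝ) - #P / Fintype.card Q) ^ 2 :=
        sum_le_sum_of_subset_of_nonneg (subset_univ L) fun _ _ _ => sq_nonneg _
    _ ≤ _ := sum_sq_card_pointsOn_sub_le P

end Incidences

theorem injOn_slope_neg_mul {A : Finset Q} (hA0 : ∀ a ∈ A, a ≠ 0) :
    Set.InjOn (fun x : Q × Q => (x.1, -(x.1 * x.2))) ↑(A ×ˢ A) := by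
  rintro ⟨a, b⟩ hab ⟨a', b'⟩ - h
  obtain ⟨rfl, h⟩ := Prod.mk.inj h
  rw [neg_inj] at h
  exact Prod.ext rfl (Quasifield.mul_left_cancel₀ (hA0 a (mem_product.mp (mem_coe.mp hab)).1) h)

theorem card_le_card_pointsOn_mul_add [DecidableEq Q] (A : Finset Q) {a b : Q}
    (ha : a ∈ A) (hb : b ∈ A) :
    #A ≤ #{p ∈ (A * A) ×ˢ (A + A) | OnLine (a, -(a * b)) p} := by
  refine card_le_card_of_injOn (fun t => (a * t, t + b)) (fun t ht => ?_)
    fun t _ t' _ h => add_right_cancel (Prod.mk.inj h).2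
  simp only [mem_coe, mem_filter, mem_product]
  refine ⟨⟨mul_mem_mul ha ht, add_mem_add ht hb⟩, ?_⟩
  show a * t = a * (t + b) + -(a * b)
  rw [left_distrib, add_neg_cancel_right]

end Quasifield

open Finset Quasifield

theorem stmt_0_general {Q : Type*} [Quasifield Q] [Fintype Q] [DecidableEq Q]
    (A : Finset Q) (hA0 : ∀ a ∈ A, a ≠ 0)
    (m n : ℕ) (hm : m = (A + A).card) (hn : n = (A * A).card) :
    (A.card : ℝ) ^ 2 ≤
      (m : ℝ) * n * A.card / (Fintype.card Q) +
        Real.sqrt (Fintype.card Q) * Real.sqrt ((m : ℝ) * n) := by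
  have hP : (#((A * A) ×ˢ (A + A)) : ℝ) = m * n := by
    rw [card_product, hm, hn, Nat.cast_mul, mul_comm]
  rcases le_or_gt (#A : ℝ) (m * n / Fintype.card Q) with hsmall | hlarge
  · calc (#A : ℝ) ^ 2 ≤ #A * (m * n / Fintype.card Q) := by
          rw [sq]
          exact mul_le_mul_of_nonneg_left hsmall (Nat.cast_nonneg _)
      _ ≤ _ := by
        rw [mul_div_assoc', mul_comm]
        exact le_add_of_nonneg_right (by positivity)
  · have rich := card_mul_sq_sub_le_of_le_card_pointsOn ((A * A) ×ˢ (A + A))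
      ((A ×ˢ A).image fun x => (x.1, -(x.1 * x.2))) (k := #A) (hP ▸ hlarge.le) (by
        simp only [mem_image, mem_product]
        rintro _ ⟨⟨a, b⟩, ⟨ha, hb⟩, rfl⟩
        exact_mod_cast card_le_card_pointsOn_mul_add A ha hb)
    rw [card_image_of_injOn (injOn_slope_neg_mul hA0), card_product, hP] at rich
    have hdev : (#A : ℝ) * (#A - m * n / Fintype.card Q) ≤ √(Fintype.card Q) * √(m * n) := by
      rw [← Real.sqrt_mul (Nat.cast_nonneg _)]
      refine Real.le_sqrt_of_sq_le ?_
      push_cast at rich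
      linarith
    calc (#A : ℝ) ^ 2 = #A * (#A - m * n / Fintype.card Q) + m * n * #A / Fintype.card Q := by
          ring
      _ ≤ _ := by linarith

/-- Sum-product estimate in a finite quasifield (Theorem 1.4):
if `A ⊆ Q \ {0}` is nonempty, `m = |A+A|` and `n = |A·A|`, then
`|A|² ≤ m n |A| / q + √q √(m n)`. -/
theorem stmt_0 {Q : Type*} [Quasifield Q] [Fintype Q] [DecidableEq Q]
    (A : Finset Q) (hA : A.Nonempty) (hA0 : ∀ a ∈ A, a ≠ 0)
    (m n : ℕ) (hm : m = (A + A).card) (hn : n = (A * A).card) :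
    (A.card : ℝ) ^ 2 ≤
      (m : ℝ) * n * A.card / (Fintype.card Q) +
        Real.sqrt (Fintype.card Q) * Real.sqrt ((m : ℝ) * n) :=
  stmt_0_general A hA0 m n hm hn
end

section
/- Let Q be a finite (left) quasifield with q elements. If P is a set of points in Q² and L is a set of lines in Q², then the number of incidences satisfies |{(p,l) ∈ P×L : p ∈ l}| ≤ |P|·|L|/q + q^{1/2}·√(|P|·|L|). -/
/-- A line in `Q²` : either `{(x,y) : y = b·x + a}` or a vertical line `{(a,y)}`. -/
def IsLine {Q : Type*} [Quasifield Q] (l : Set (Q × Q)) : Prop :=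
  (∃ a b : Q, l = {p : Q × Q | p.2 = b * p.1 + a}) ∨ ∃ a : Q, l = {p : Q × Q | p.1 = a}

/-!
Let `d p` be the number of lines of `L` through the point `p`. Every line has `q` points and two
distinct lines meet in at most one point, so over the `q²` points of `Q²` we get `∑ d = q |L|` and
`∑ d² ≤ |L| (q + |L|)`. Hence the variance of `d` about its mean `|L| / q` is at most `q |L|`, and
Cauchy–Schwarz over `P` bounds `∑_{p ∈ P} (d p - |L| / q)` by `√(|P| q |L|)`.
-/

open Finset
open scoped Classical

lemma Finset.sum_le_card_mul_add_sqrt {ι : Type*} [Fintype ι] {f : ι → ℝ} {c V : ℝ}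
    (hV : ∑ i, (f i - c) ^ 2 ≤ V) (s : Finset ι) :
    ∑ i ∈ s, f i ≤ #s * c + √(#s * V) := by
  have hsq : (∑ i ∈ s, (f i - c)) ^ 2 ≤ #s * V :=
    calc (∑ i ∈ s, (f i - c)) ^ 2 ≤ #s * ∑ i ∈ s, (f i - c) ^ 2 := sq_sum_le_card_mul_sum_sq
      _ ≤ #s * V := by
        gcongr
        exact (sum_le_univ_sum_of_nonneg fun _ => sq_nonneg _).trans hV
  have := Real.le_sqrt_of_sq_le hsq
  rw [sum_sub_distrib, sum_const, nsmul_eq_mul] at this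
  linarith

lemma Finset.sum_sq_sub_div_le {ι : Type*} [Fintype ι] {d : ι → ℝ} {s m : ℝ} (hs : 0 < s)
    (hcard : (Fintype.card ι : ℝ) = s ^ 2) (hsum : ∑ i, d i = s * m)
    (hsum_sq : ∑ i, d i ^ 2 ≤ m * (s + m)) :
    ∑ i, (d i - m / s) ^ 2 ≤ s * m := by
  have hexpand : ∑ i, (d i - m / s) ^ 2 = ∑ i, d i ^ 2 - 2 * (m / s) * ∑ i, d i
      + Fintype.card ι * (m / s) ^ 2 := by
    have hexp : ∀ i, (d i - m / s) ^ 2 = d i ^ 2 - 2 * (m / s) * d i + (m / s) ^ 2 :=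
      fun i => by ring
    simp only [hexp, sum_add_distrib, sum_sub_distrib, ← mul_sum, sum_const, card_univ,
      nsmul_eq_mul]
  rw [hexpand, hsum, hcard]
  field_simp
  nlinarith

section Incidences

variable {α : Type*} (L : Finset (Set α))

lemma card_filter_mem_product (P : Finset α) :
    #{x ∈ P ×ˢ L | x.1 ∈ x.2} = ∑ p ∈ P, #{l ∈ L | p ∈ l} := by
  rw [card_filter, sum_product]
  simp only [card_filter]

variable [Fintype α]

lemma sum_card_filter_mem : ∑ p, #{l ∈ L | p ∈ l} = ∑ l ∈ L, l.ncard := by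
  have := sum_card_bipartiteAbove_eq_sum_card_bipartiteBelow (s := univ) (t := L)
    (r := fun p (l : Set α) => p ∈ l)
  convert this using 2 with p _ l
  · rfl
  rw [Set.ncard_eq_toFinset_card']
  congr 1; ext; simp [bipartiteBelow]

lemma sum_sq_card_filter_mem :
    ∑ p, #{l ∈ L | p ∈ l} ^ 2 = ∑ l ∈ L, ∑ l' ∈ L, (l ∩ l').ncard := by
  have := sum_card_bipartiteAbove_eq_sum_card_bipartiteBelow (s := univ) (t := L ×ˢ L)
    (r := fun p (ll : Set α × Set α) => p ∈ ll.1 ∧ p ∈ ll.2)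
  rw [← sum_product']
  convert this using 2 with p _ ll
  · rw [sq, ← card_product, ← filter_product]; rfl
  · rw [Set.ncard_eq_toFinset_card']
    congr 1; ext; simp [bipartiteBelow]

lemma sum_sq_card_filter_mem_le {s : ℕ} (hsize : ∀ l ∈ L, l.ncard = s)
    (hinter : ∀ l ∈ L, ∀ l' ∈ L, l ≠ l' → (l ∩ l').Subsingleton) :
    ∑ p, #{l ∈ L | p ∈ l} ^ 2 ≤ #L * (s + #L) := by
  rw [sum_sq_card_filter_mem]
  calc ∑ l ∈ L, ∑ l' ∈ L, (l ∩ l').ncard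
      ≤ ∑ l ∈ L, ∑ l' ∈ L, ((if l = l' then s else 0) + 1) := by
        gcongr with l hl l' hl'
        split_ifs with h
        · simp [h, hsize l' hl']
        · simpa using Set.ncard_le_one_iff_subsingleton.mpr (hinter l hl l' hl' h)
    _ = #L * (s + #L) := by
        simp_rw [sum_add_distrib, sum_ite_eq, sum_const, smul_eq_mul, mul_one]
        rw [sum_ite_of_true fun _ h => h, sum_const, smul_eq_mul, mul_add]

theorem card_incidences_le {s : ℕ} (hs : 0 < s) (hα : Fintype.card α = s ^ 2)
    (hsize : ∀ l ∈ L, l.ncard = s) (hinter : ∀ l ∈ L, ∀ l' ∈ L, l ≠ l' → (l ∩ l').Subsingleton)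
    (P : Finset α) :
    (#{x ∈ P ×ˢ L | x.1 ∈ x.2} : ℝ) ≤ #P * #L / s + √s * √(#P * #L) := by
  have hvar : ∑ p, ((#{l ∈ L | p ∈ l} : ℝ) - #L / s) ^ 2 ≤ s * #L := by
    refine sum_sq_sub_div_le (by positivity) (by exact_mod_cast hα) ?_ ?_
    · rw [← Nat.cast_mul, mul_comm, ← smul_eq_mul, ← sum_const, ← sum_congr rfl hsize]
      exact_mod_cast sum_card_filter_mem L
    · exact_mod_cast sum_sq_card_filter_mem_le L hsize hinter
  rw [card_filter_mem_product]
  push_cast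
  convert sum_le_card_mul_add_sqrt hvar P using 2
  · ring
  · rw [← Real.sqrt_mul (by positivity)]; ring_nf

end Incidences

section Quasifield

variable {Q : Type*} [Quasifield Q]

lemma Quasifield.eq_and_eq_of_mul_add_eq_mul_add {a b a' b' x x' : Q} (hx : x ≠ x')
    (h : b * x + a = b' * x + a') (h' : b * x' + a = b' * x' + a') : b = b' ∧ a = a' := by
  by_cases hb : b = b'
  · subst hb
    exact ⟨rfl, add_left_cancel h⟩
  · have solves : ∀ {y : Q}, b * y + a = b' * y + a' → b * y = b' * y + (a' - a) := by
      intro y hy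
      rw [← add_sub_assoc, ← hy, add_sub_cancel_right]
    obtain ⟨y, -, huniq⟩ := Quasifield.existsUnique_affine b b' (a' - a) hb
    exact absurd ((huniq x (solves h)).trans (huniq x' (solves h')).symm) hx

namespace IsLine

lemma eq_setOf_fst_eq {l : Set (Q × Q)} (hl : IsLine l) {p p' : Q × Q} (hne : p ≠ p')
    (hp : p ∈ l) (hp' : p' ∈ l) (hx : p.1 = p'.1) : l = {x | x.1 = p.1} := by
  obtain ⟨a, b, rfl⟩ | ⟨a, rfl⟩ := hl
  · refine absurd (Prod.ext hx ?_) hne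
    rw [show p.2 = _ from hp, show p'.2 = _ from hp', hx]
  · rw [show p.1 = a from hp]

lemma eq_of_mem {l l' : Set (Q × Q)} (hl : IsLine l) (hl' : IsLine l') {p p' : Q × Q}
    (hne : p ≠ p') (hpl : p ∈ l) (hp'l : p' ∈ l) (hpl' : p ∈ l') (hp'l' : p' ∈ l') :
    l = l' := by
  by_cases hx : p.1 = p'.1
  · rw [hl.eq_setOf_fst_eq hne hpl hp'l hx, hl'.eq_setOf_fst_eq hne hpl' hp'l' hx]
  obtain ⟨a, b, rfl⟩ | ⟨a, rfl⟩ := hl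
  · obtain ⟨a', b', rfl⟩ | ⟨a', rfl⟩ := hl'
    · obtain ⟨rfl, rfl⟩ := Quasifield.eq_and_eq_of_mul_add_eq_mul_add hx
        (hpl.symm.trans hpl') (hp'l.symm.trans hp'l')
      rfl
    · exact absurd (hpl'.trans hp'l'.symm) hx
  · exact absurd (hpl.trans hp'l.symm) hx

lemma inter_subsingleton {l l' : Set (Q × Q)} (hl : IsLine l) (hl' : IsLine l') (hne : l ≠ l') :
    (l ∩ l').Subsingleton := by
  intro p hp p' hp'
  by_contra hpp'
  exact hne (hl.eq_of_mem hl' hpp' hp.1 hp'.1 hp.2 hp'.2)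

lemma ncard_eq {l : Set (Q × Q)} (hl : IsLine l) : l.ncard = Nat.card Q := by
  obtain ⟨a, b, rfl⟩ | ⟨a, rfl⟩ := hl
  · have : {p : Q × Q | p.2 = b * p.1 + a} = Set.range fun x => (x, b * x + a) := by
      ext p; constructor
      · intro hp; exact ⟨p.1, Prod.ext rfl hp.symm⟩
      · rintro ⟨x, rfl⟩; rfl
    rw [this, Set.ncard_range_of_injective fun x y h => congrArg Prod.fst h]
  · have : {p : Q × Q | p.1 = a} = Set.range fun y => (a, y) := by
      ext p; constructor
      · intro hp; exact ⟨p.2, Prod.ext hp.symm rfl⟩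
      · rintro ⟨y, rfl⟩; rfl
    rw [this, Set.ncard_range_of_injective fun x y h => congrArg Prod.snd h]

end IsLine

end Quasifield

/-- Szemerédi–Trotter type theorem in a finite quasifield (Theorem 1.7):
the number of incidences between a set of points `P` and a set of lines `L` in `Q²`
is at most `|P||L|/q + √q·√(|P||L|)`. -/
theorem stmt_2 {Q : Type*} [Quasifield Q] [Fintype Q]
    (P : Set (Q × Q)) (L : Set (Set (Q × Q))) (hL : ∀ l ∈ L, IsLine l) :
    (Set.ncard {pl : (Q × Q) × Set (Q × Q) | pl.1 ∈ P ∧ pl.2 ∈ L ∧ pl.1 ∈ pl.2} : ℝ) ≤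
      (P.ncard : ℝ) * L.ncard / (Fintype.card Q) +
        Real.sqrt (Fintype.card Q) * Real.sqrt ((P.ncard : ℝ) * L.ncard) := by
  have hincid : {pl : (Q × Q) × Set (Q × Q) | pl.1 ∈ P ∧ pl.2 ∈ L ∧ pl.1 ∈ pl.2}
      = ↑{x ∈ P.toFinset ×ˢ L.toFinset | x.1 ∈ x.2} := by
    ext; simp [and_assoc]
  rw [hincid, Set.ncard_coe_finset, Set.ncard_eq_toFinset_card' P,
    Set.ncard_eq_toFinset_card' L]
  have hL' : ∀ l ∈ L.toFinset, IsLine l := fun l hl => hL l (Set.mem_toFinset.mp hl)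
  refine card_incidences_le L.toFinset Fintype.card_pos (by simp [sq])
    (fun l hl => ?_) (fun l hl l' hl' hne => (hL' l hl).inter_subsingleton (hL' l' hl') hne) _
  rw [(hL' l hl).ncard_eq, Nat.card_eq_fintype_card]
end

section
/- Let Q be a finite (left) quasifield with q elements. If A, B, C ⊆ Q, then |A + B·C| ≥ q − q³/(|A|·|B|·|C| + q²), where A + B·C = {a + b·c : a ∈ A, b ∈ B, c ∈ C}. -/
/-!
Write `S = A + B·C`, `q = |Q|`, `K = |A||B||C|`, and let `φ = 1_A - |A|/q` be the balanced
indicator of `A`. The function `F x = ∑_{b ∈ B, c ∈ C} φ (x - b c)` has total sum `0` and takes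
the constant value `-K/q` off `S`, so Cauchy–Schwarz on `S` gives `q (q - |S|) (K/q)² ≤ |S| ∑ F²`.
On the other hand `∑ F² ≤ q K`: after Cauchy–Schwarz over `c ∈ C`, the sum over all `c ∈ Q` of
`∑_x φ (x - b c) φ (x - b' c)` vanishes for `b ≠ b'`, because `c ↦ b c - b' c` is a bijection of
`Q` by the quasifield axiom. Together these give `(q - |S|) K ≤ |S| q²`, which rearranges to the
claim.
-/

open Finset
open scoped Pointwise

section BalancedIndicator

variable {α : Type*} [Fintype α] [DecidableEq α]

noncomputable def balancedIndicator (A : Finset α) (x : α) : ℝ :=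
  (if x ∈ A then 1 else 0) - #A / Fintype.card α

theorem sum_balancedIndicator [Nonempty α] (A : Finset α) : ∑ x, balancedIndicator A x = 0 := by
  have hq : (Fintype.card α : ℝ) ≠ 0 := by positivity
  simp only [balancedIndicator, sum_sub_distrib, sum_boole, sum_const, card_univ, nsmul_eq_mul,
    filter_univ_mem]
  field_simp
  ring

theorem sum_balancedIndicator_sq_le (A : Finset α) : ∑ x, balancedIndicator A x ^ 2 ≤ #A := by
  set t : ℝ := #A / Fintype.card α
  have hqt : Fintype.card α * t ≤ #A := by
    rcases (Fintype.card α).eq_zero_or_pos with hq | hq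
    · simp [hq]
    · simp only [t]; rw [mul_div_cancel₀ _ (by positivity)]
  have hsq : ∀ x, balancedIndicator A x ^ 2 = (if x ∈ A then 1 - 2 * t else 0) + t ^ 2 := by
    intro x
    simp only [balancedIndicator]
    split_ifs <;> ring
  simp only [hsq, sum_add_distrib, sum_ite_mem, univ_inter, sum_const, card_univ, nsmul_eq_mul]
  have ht : 0 ≤ t := by positivity
  nlinarith

end BalancedIndicator

theorem Finset.card_mul_card_compl_mul_sq_le {ι : Type*} [Fintype ι] [DecidableEq ι]
    {f : ι → ℝ} (hf : ∑ i, f i = 0) (S : Finset ι) {t : ℝ} (ht : ∀ i ∉ S, f i = t) :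
    Fintype.card ι * #Sᶜ * t ^ 2 ≤ #S * ∑ i, f i ^ 2 := by
  have hcompl : ∑ i ∈ Sᶜ, f i = #Sᶜ * t := by
    rw [sum_congr rfl fun i hi => ht i (mem_compl.1 hi), sum_const, nsmul_eq_mul]
  have hcompl_sq : ∑ i ∈ Sᶜ, f i ^ 2 = #Sᶜ * t ^ 2 := by
    rw [sum_congr rfl fun i hi => by rw [ht i (mem_compl.1 hi)], sum_const, nsmul_eq_mul]
  have hS : ∑ i ∈ S, f i = -(#Sᶜ * t) := by
    linarith [sum_add_sum_compl S f]
  have hS_sq : ∑ i ∈ S, f i ^ 2 = ∑ i, f i ^ 2 - #Sᶜ * t ^ 2 := by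
    linarith [sum_add_sum_compl S fun i => f i ^ 2]
  have hcs := sq_sum_le_card_mul_sum_sq (s := S) (f := f)
  have hcard : (Fintype.card ι : ℝ) = #S + #Sᶜ := by exact_mod_cast (card_add_card_compl S).symm
  rw [hS, hS_sq] at hcs
  rw [hcard]
  nlinarith

namespace Quasifield

variable {Q : Type*} [Quasifield Q]

theorem bijective_mul_sub_mul {b b' : Q} (h : b ≠ b') :
    Function.Bijective fun c : Q => b * c - b' * c :=
  (Function.bijective_iff_existsUnique _).2 fun d => by
    simpa only [sub_eq_iff_eq_add'] using existsUnique_affine b b' d h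

variable [Fintype Q]

theorem sum_sum_mul_sub_mul_sub_of_ne {R : Type*} [CommSemiring R] (f : Q → R) {b b' : Q}
    (h : b ≠ b') : ∑ c, ∑ x, f (x - b * c) * f (x - b' * c) = (∑ x, f x) ^ 2 := by
  have hshift : ∀ c, ∑ x, f (x - b * c) * f (x - b' * c) =
      ∑ y, f y * f (y + (b * c - b' * c)) := fun c =>
    Fintype.sum_equiv (Equiv.subRight (b * c)) _ _ fun x => by
      simp only [Equiv.subRight_apply]; congr 2; abel
  have hinner : ∀ y, ∑ c, f (y + (b * c - b' * c)) = ∑ z, f z := fun y =>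
    ((bijective_mul_sub_mul h).sum_comp fun z => f (y + z)).trans
      (Equiv.sum_comp (Equiv.addLeft y) f)
  simp only [hshift]
  rw [sum_comm, sq, sum_mul_sum]
  simp only [← mul_sum, hinner]

theorem sum_sum_sq_sum_mul_sub {f : Q → ℝ} (hf : ∑ x, f x = 0) (B : Finset Q) :
    ∑ c, ∑ x, (∑ b ∈ B, f (x - b * c)) ^ 2 = #B * Fintype.card Q * ∑ x, f x ^ 2 := by
  have hdiag : ∀ b, ∑ c, ∑ x, f (x - b * c) * f (x - b * c) = Fintype.card Q * ∑ x, f x ^ 2 := by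
    intro b
    have hc : ∀ c, ∑ x, f (x - b * c) * f (x - b * c) = ∑ x, f x ^ 2 := fun c =>
      Fintype.sum_equiv (Equiv.subRight (b * c)) _ _ fun x => (sq _).symm
    simp only [hc, sum_const, card_univ, nsmul_eq_mul]
  calc ∑ c, ∑ x, (∑ b ∈ B, f (x - b * c)) ^ 2
      = ∑ b ∈ B, ∑ b' ∈ B, ∑ c, ∑ x, f (x - b * c) * f (x - b' * c) := by
        simp only [sq, sum_mul_sum]
        refine (sum_congr rfl fun c _ => sum_comm).trans ?_
        refine (sum_congr rfl fun c _ => sum_congr rfl fun b _ => sum_comm).trans ?_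
        exact sum_comm.trans (sum_congr rfl fun b _ => sum_comm)
    _ = ∑ b ∈ B, Fintype.card Q * ∑ x, f x ^ 2 := by
        refine sum_congr rfl fun b hb => ?_
        rw [sum_eq_single_of_mem b hb fun b' _ hb' => ?_, hdiag]
        rw [sum_sum_mul_sub_mul_sub_of_ne f hb'.symm, hf, zero_pow two_ne_zero]
    _ = #B * Fintype.card Q * ∑ x, f x ^ 2 := by rw [sum_const, nsmul_eq_mul, mul_assoc]

theorem sum_sq_sum_sum_mul_sub_le {f : Q → ℝ} (hf : ∑ x, f x = 0) (B C : Finset Q) :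
    ∑ x, (∑ b ∈ B, ∑ c ∈ C, f (x - b * c)) ^ 2 ≤
      #C * (#B * Fintype.card Q * ∑ x, f x ^ 2) := by
  calc ∑ x, (∑ b ∈ B, ∑ c ∈ C, f (x - b * c)) ^ 2
      ≤ ∑ x, #C * ∑ c ∈ C, (∑ b ∈ B, f (x - b * c)) ^ 2 := by
        gcongr with x
        rw [sum_comm]
        exact sq_sum_le_card_mul_sum_sq
    _ = #C * ∑ c ∈ C, ∑ x, (∑ b ∈ B, f (x - b * c)) ^ 2 := by rw [← mul_sum, sum_comm]
    _ ≤ #C * ∑ c, ∑ x, (∑ b ∈ B, f (x - b * c)) ^ 2 := by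
        gcongr
        exact subset_univ C
    _ = #C * (#B * Fintype.card Q * ∑ x, f x ^ 2) := by rw [sum_sum_sq_sum_mul_sub hf]

theorem sum_sum_balancedIndicator_sub_mul_of_notMem [DecidableEq Q] {A B C : Finset Q} {x : Q}
    (hx : x ∉ A + B * C) :
    ∑ b ∈ B, ∑ c ∈ C, balancedIndicator A (x - b * c) = -(#A * #B * #C / Fintype.card Q) := by
  have hφ : ∀ b ∈ B, ∀ c ∈ C, balancedIndicator A (x - b * c) = -(#A / Fintype.card Q) := by
    intro b hb c hc
    have : x - b * c ∉ A := fun h => hx (by simpa using add_mem_add h (mul_mem_mul hb hc))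
    simp [balancedIndicator, this]
  simp only [sum_congr rfl fun b hb => sum_congr rfl (hφ b hb), sum_const, nsmul_eq_mul]
  ring

theorem card_compl_add_mul_mul_le [DecidableEq Q] (A B C : Finset Q) :
    ((Fintype.card Q : ℝ) - #(A + B * C)) * (#A * #B * #C) ≤
      #(A + B * C) * Fintype.card Q ^ 2 := by
  set q : ℝ := (Fintype.card Q : ℝ)
  have hq : 0 < q := by positivity
  set S := A + B * C
  set s : ℝ := (#S : ℝ)
  set K : ℝ := (#A : ℝ) * #B * #C
  set F : Q → ℝ := fun x => ∑ b ∈ B, ∑ c ∈ C, balancedIndicator A (x - b * c)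
  have hF : ∑ x, F x = 0 := by
    simp only [F]
    rw [sum_comm]
    refine sum_eq_zero fun b _ => ?_
    rw [sum_comm]
    exact sum_eq_zero fun c _ =>
      (Equiv.sum_comp (Equiv.subRight (b * c)) _).trans (sum_balancedIndicator A)
  have hF_off : ∀ x ∉ S, F x = -(K / q) := fun x hx =>
    sum_sum_balancedIndicator_sub_mul_of_notMem hx
  have hF_sq : ∑ x, F x ^ 2 ≤ K * q := by
    calc ∑ x, F x ^ 2 ≤ #C * (#B * q * ∑ x, balancedIndicator A x ^ 2) :=
          sum_sq_sum_sum_mul_sub_le (sum_balancedIndicator A) B C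
      _ ≤ #C * (#B * q * #A) := by gcongr; exact sum_balancedIndicator_sq_le A
      _ = K * q := by ring
  have hcompl : (#Sᶜ : ℝ) = q - s := by rw [card_compl, Nat.cast_sub (card_le_univ S)]
  have hcs := card_mul_card_compl_mul_sq_le hF S hF_off
  rw [hcompl, neg_sq, div_pow] at hcs
  have hK : (q - s) * K ^ 2 ≤ s * q ^ 2 * K :=
    calc (q - s) * K ^ 2 = q * (q - s) * (K ^ 2 / q ^ 2) * q := by field_simp
      _ ≤ s * (K * q) * q :=
        mul_le_mul_of_nonneg_right (hcs.trans (mul_le_mul_of_nonneg_left hF_sq (by positivity)))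
          hq.le
      _ = s * q ^ 2 * K := by ring
  by_cases hK0 : K = 0
  · rw [hK0, MulZeroClass.mul_zero]
    positivity
  · exact le_of_mul_le_mul_right (by linear_combination hK) (lt_of_le_of_ne' (by positivity) hK0)

end Quasifield

/-- Theorem 1.8: for `A, B, C ⊆ Q`, `|A + B·C| ≥ q - q³/(|A||B||C| + q²)`. -/
theorem stmt_4 {Q : Type*} [Quasifield Q] [Fintype Q] [DecidableEq Q]
    (A B C : Finset Q) :
    (Fintype.card Q : ℝ) -
        (Fintype.card Q : ℝ) ^ 3 /
          ((A.card : ℝ) * B.card * C.card + (Fintype.card Q : ℝ) ^ 2) ≤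
      ((A + B * C).card : ℝ) := by
  have hkey := Quasifield.card_compl_add_mul_mul_le A B C
  rw [sub_le_comm, le_div_iff₀ (by positivity)]
  linear_combination hkey
end

section
/- Let Q be a finite (left) quasifield with q elements, let A, B, C, D ⊆ Q, and let γ ∈ Q. If N_γ(A,B,C,D) denotes the number of quadruples (a,b,c,d) ∈ A×B×C×D with a + b + γ = c·d, then |N_γ(A,B,C,D) − (q+1)·|A|·|B|·|C|·|D|/(q²+q+1)| ≤ q^{1/2}·√(|A|·|B|·|C|·|D|). -/
set_option linter.unusedSectionVars false

namespace QfAux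

open Finset

variable {Q : Type*} [Quasifield Q] [Fintype Q] [DecidableEq Q]

lemma qf_mul_neg (a b : Q) : a * (-b) = -(a * b) := by
  have h := Quasifield.left_distrib a b (-b)
  rw [add_neg_cancel, Quasifield.mul_zero] at h
  exact eq_neg_of_add_eq_zero_right h.symm

lemma qf_mul_sub (a b c : Q) : a * (b - c) = a * b - a * c := by
  rw [sub_eq_add_neg, Quasifield.left_distrib, qf_mul_neg, ← sub_eq_add_neg]

lemma existsUnique_mul_right' (c d : Q) (hc : c ≠ 0) : ∃! m : Q, m * c = d := by
  by_cases hd : d = 0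
  · subst hd
    refine ⟨0, Quasifield.zero_mul c, fun m hm => ?_⟩
    by_contra hm0
    exact Quasifield.mul_ne_zero m c hm0 hc hm
  · exact Quasifield.existsUnique_mul_right c d hc hd

/-- The lines of the projective plane over `Q`:
slope lines `(m,e) : y = m·x + e`, vertical lines `x = e`, and the line at infinity. -/
abbrev Ln (Q : Type*) := (Q × Q) ⊕ (Q ⊕ Unit)

/-- Incidence matrix entry between an affine point and a line. -/
def mval (p : Q × Q) : Ln Q → ℝ
  | Sum.inl me => if p.2 = me.1 * p.1 + me.2 then 1 else 0
  | Sum.inr (Sum.inl e) => if p.1 = e then 1 else 0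
  | Sum.inr (Sum.inr _) => 0

lemma mval_sq (p : Q × Q) (ℓ : Ln Q) : mval p ℓ * mval p ℓ = mval p ℓ := by
  rcases ℓ with me | e | u
  · simp only [mval]; split_ifs <;> ring
  · simp only [mval]; split_ifs <;> ring
  · simp [mval]

lemma sum_ind_unique {α : Type*} [Fintype α] (P : α → Prop) [DecidablePred P]
    (h : ∃! a, P a) : ∑ a : α, (if P a then (1:ℝ) else 0) = 1 := by
  obtain ⟨a, ha, hu⟩ := h
  rw [Finset.sum_eq_single a]
  · simp [ha]
  · intro b _ hb
    have : ¬ P b := fun hPb => hb (hu b hPb)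
    simp [this]
  · intro h; exact absurd (Finset.mem_univ a) h

lemma mul_ind (P R : Prop) [Decidable P] [Decidable R] :
    (if P then (1:ℝ) else 0) * (if R then 1 else 0) = if P ∧ R then 1 else 0 := by
  by_cases hP : P <;> by_cases hR : R <;> simp [hP, hR]

lemma sum_and_const {α : Type*} [Fintype α] [DecidableEq α] (C : Prop) [Decidable C] (e0 : α) :
    ∑ e : α, (if C ∧ e = e0 then (1:ℝ) else 0) = if C then 1 else 0 := by
  by_cases hC : C <;> simp [hC]

/-- Every affine point lies on exactly `q+1` lines. -/
lemma row_sum (p : Q × Q) : ∑ ℓ : Ln Q, mval p ℓ = (Fintype.card Q : ℝ) + 1 := by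
  obtain ⟨x, y⟩ := p
  rw [Fintype.sum_sum_type, Fintype.sum_sum_type]
  have h1 : ∑ me : Q × Q, mval (x, y) (Sum.inl me) = (Fintype.card Q : ℝ) := by
    rw [Fintype.sum_prod_type]
    have h : ∀ m : Q, ∑ e : Q, mval (x, y) (Sum.inl (m, e)) = 1 := by
      intro m
      simp only [mval]
      apply sum_ind_unique
      exact ⟨y - m * x, by abel, fun e he => by rw [he]; abel⟩
    simp [h]
  have h2 : ∑ e : Q, mval (x, y) (Sum.inr (Sum.inl e)) = 1 := by
    simp only [mval]
    exact sum_ind_unique _ ⟨x, rfl, fun e he => he.symm⟩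
  have h3 : ∑ u : Unit, mval (x, y) (Sum.inr (Sum.inr u)) = 0 := by simp [mval]
  rw [h1, h2, h3]; ring

/-- Two distinct affine points lie on exactly one common line. -/
lemma col_corr (p p' : Q × Q) (hpp : p ≠ p') :
    ∑ ℓ : Ln Q, mval p ℓ * mval p' ℓ = 1 := by
  obtain ⟨x, y⟩ := p
  obtain ⟨x', y'⟩ := p'
  rw [Fintype.sum_sum_type, Fintype.sum_sum_type]
  have h3 : ∑ u : Unit,
      mval (x, y) (Sum.inr (Sum.inr u)) * mval (x', y') (Sum.inr (Sum.inr u)) = 0 := by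
    simp [mval]
  by_cases hx : x = x'
  · have hy : y ≠ y' := fun hy => hpp (by rw [hx, hy])
    have h1 : ∑ me : Q × Q, mval (x, y) (Sum.inl me) * mval (x', y') (Sum.inl me) = 0 := by
      apply Finset.sum_eq_zero
      intro me _
      simp only [mval, mul_ind]
      rw [if_neg]
      rintro ⟨hA, hB⟩
      exact hy (by rw [hA, hB, hx])
    have h2 : ∑ e : Q,
        mval (x, y) (Sum.inr (Sum.inl e)) * mval (x', y') (Sum.inr (Sum.inl e)) = 1 := by
      simp only [mval, mul_ind]
      exact sum_ind_unique _ ⟨x, ⟨rfl, hx.symm⟩, fun e he => he.1.symm⟩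
    rw [h1, h2, h3]; ring
  · have hsub : x' - x ≠ 0 := sub_ne_zero.mpr (Ne.symm hx)
    have h2 : ∑ e : Q,
        mval (x, y) (Sum.inr (Sum.inl e)) * mval (x', y') (Sum.inr (Sum.inl e)) = 0 := by
      apply Finset.sum_eq_zero
      intro e _
      simp only [mval, mul_ind]
      rw [if_neg]
      rintro ⟨hA, hB⟩
      exact hx (hA.trans hB.symm)
    have hcond : ∀ m e : Q,
        (y = m * x + e ∧ y' = m * x' + e) ↔ (m * (x' - x) = y' - y ∧ e = y - m * x) := by
      intro m e
      constructor
      · rintro ⟨hA, hB⟩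
        have e1 : m * x = y - e := by rw [hA]; abel
        have e2 : m * x' = y' - e := by rw [hB]; abel
        refine ⟨?_, by rw [hA]; abel⟩
        rw [qf_mul_sub, e1, e2]; abel
      · rintro ⟨hm, he⟩
        have h5 : m * x' = m * x + m * (x' - x) := by
          rw [← Quasifield.left_distrib]; congr 1; abel
        exact ⟨by rw [he]; abel, by rw [h5, hm, he]; abel⟩
    have h1 : ∑ me : Q × Q, mval (x, y) (Sum.inl me) * mval (x', y') (Sum.inl me) = 1 := by
      rw [Fintype.sum_prod_type]
      have hin : ∀ m : Q, (∑ e : Q,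
          mval (x, y) (Sum.inl (m, e)) * mval (x', y') (Sum.inl (m, e)))
          = if m * (x' - x) = y' - y then (1:ℝ) else 0 := by
        intro m
        simp only [mval, mul_ind]
        rw [← sum_and_const (m * (x' - x) = y' - y) (y - m * x)]
        exact Finset.sum_congr rfl fun e _ => if_congr (hcond m e) rfl rfl
      simp only [hin]
      exact sum_ind_unique _ (existsUnique_mul_right' (x' - x) (y' - y) hsub)
    rw [h1, h2, h3]; ring

lemma card_Ln : (Fintype.card (Ln Q) : ℝ)
    = (Fintype.card Q : ℝ) ^ 2 + (Fintype.card Q : ℝ) + 1 := by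
  simp [Fintype.card_sum, Fintype.card_prod]
  ring

/-- Expanding an indicator-weighted sum over all lines. -/
lemma sum_v_gen {ι β : Type*} [Fintype β] [DecidableEq β] (T : Finset ι) (φ : ι → β)
    (f : β → ℝ) :
    ∑ ℓ : β, (∑ cb ∈ T, if φ cb = ℓ then (1:ℝ) else 0) * f ℓ = ∑ cb ∈ T, f (φ cb) := by
  simp only [Finset.sum_mul, ite_mul, one_mul, zero_mul]
  rw [Finset.sum_comm]
  refine Finset.sum_congr rfl fun cb _ => ?_
  rw [Finset.sum_ite_eq]
  simp

lemma v_apply_self {ι β : Type*} [DecidableEq β] (T : Finset ι) (φ : ι → β)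
    (hφ : Function.Injective φ) {cb : ι} (hcb : cb ∈ T) :
    ∑ cb' ∈ T, (if φ cb' = φ cb then (1:ℝ) else 0) = 1 := by
  have h0 : ∀ b ∈ T, b ≠ cb → (if φ b = φ cb then (1:ℝ) else 0) = 0 := by
    intro b _ hb
    have hne : ¬ φ b = φ cb := fun h => hb (hφ h)
    simp [hne]
  rw [Finset.sum_eq_single_of_mem cb hcb h0, if_pos rfl]

end QfAux

/-- Theorem 1.9: if `N` is the number of `(a,b,c,d) ∈ A×B×C×D` with `a + b + γ = c·d`,
then `|N - (q+1)|A||B||C||D|/(q²+q+1)| ≤ √q·√(|A||B||C||D|)`. -/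
theorem stmt_5 {Q : Type*} [Quasifield Q] [Fintype Q] [DecidableEq Q]
    (A B C D : Finset Q) (γ : Q) (N : ℕ)
    (hN : N = ((A ×ˢ B ×ˢ C ×ˢ D).filter
      (fun x => x.1 + x.2.1 + γ = x.2.2.1 * x.2.2.2)).card) :
    |(N : ℝ) - ((Fintype.card Q : ℝ) + 1) * A.card * B.card * C.card * D.card /
        ((Fintype.card Q : ℝ) ^ 2 + (Fintype.card Q : ℝ) + 1)| ≤
      Real.sqrt (Fintype.card Q) *
        Real.sqrt ((A.card : ℝ) * B.card * C.card * D.card) := by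
  classical
  set qr : ℝ := (Fintype.card Q : ℝ) with hqr
  have hqr0 : (0:ℝ) ≤ qr := Nat.cast_nonneg _
  set n : ℝ := qr ^ 2 + qr + 1 with hn
  have hn0 : (0:ℝ) < n := by positivity
  set S : Finset (Q × Q) := D ×ˢ A with hS
  set T : Finset (Q × Q) := C ×ˢ B with hT
  set lineOf : Q × Q → QfAux.Ln Q := fun cb => Sum.inl (cb.1, -(cb.2 + γ)) with hlineOf
  have hinj : Function.Injective lineOf := by
    rintro ⟨c, b⟩ ⟨c', b'⟩ h
    simp only [hlineOf, Sum.inl.injEq, Prod.mk.injEq] at h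
    obtain ⟨h1, h2⟩ := h
    have hb : b = b' := by
      have := neg_injective h2
      exact add_right_cancel this
    exact Prod.ext h1 hb
  -- Step 1: N equals the incidence sum.
  have hNval : (N : ℝ) = ∑ p ∈ S, ∑ cb ∈ T, QfAux.mval p (lineOf cb) := by
    have point : ∀ a b c d : Q, QfAux.mval (d, a) (lineOf (c, b))
        = if a + b + γ = c * d then (1:ℝ) else 0 := by
      intro a b c d
      simp only [hlineOf, QfAux.mval]
      refine if_congr ?_ rfl rfl
      constructor
      · intro h; rw [h]; abel
      · intro h; rw [← h]; abel
    have hR : ∑ p ∈ S, ∑ cb ∈ T, QfAux.mval p (lineOf cb)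
        = ∑ d ∈ D, ∑ a ∈ A, ∑ c ∈ C, ∑ b ∈ B,
            (if a + b + γ = c * d then (1:ℝ) else 0) := by
      rw [hS, hT, Finset.sum_product]
      refine Finset.sum_congr rfl fun d _ => ?_
      refine Finset.sum_congr rfl fun a _ => ?_
      rw [Finset.sum_product]
      exact Finset.sum_congr rfl fun c _ => Finset.sum_congr rfl fun b _ => point a b c d
    have hL : (N : ℝ) = ∑ a ∈ A, ∑ b ∈ B, ∑ c ∈ C, ∑ d ∈ D,
        (if a + b + γ = c * d then (1:ℝ) else 0) := by
      rw [hN, Finset.card_filter]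
      push_cast
      rw [Finset.sum_product]
      refine Finset.sum_congr rfl fun a _ => ?_
      rw [Finset.sum_product]
      refine Finset.sum_congr rfl fun b _ => ?_
      rw [Finset.sum_product]
    rw [hL, hR]
    calc ∑ a ∈ A, ∑ b ∈ B, ∑ c ∈ C, ∑ d ∈ D, (if a + b + γ = c * d then (1:ℝ) else 0)
        = ∑ a ∈ A, ∑ b ∈ B, ∑ d ∈ D, ∑ c ∈ C, (if a + b + γ = c * d then (1:ℝ) else 0) :=
          Finset.sum_congr rfl fun a _ => Finset.sum_congr rfl fun b _ => Finset.sum_comm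
      _ = ∑ a ∈ A, ∑ d ∈ D, ∑ b ∈ B, ∑ c ∈ C, (if a + b + γ = c * d then (1:ℝ) else 0) :=
          Finset.sum_congr rfl fun a _ => Finset.sum_comm
      _ = ∑ d ∈ D, ∑ a ∈ A, ∑ b ∈ B, ∑ c ∈ C, (if a + b + γ = c * d then (1:ℝ) else 0) :=
          Finset.sum_comm
      _ = ∑ d ∈ D, ∑ a ∈ A, ∑ c ∈ C, ∑ b ∈ B, (if a + b + γ = c * d then (1:ℝ) else 0) :=
          Finset.sum_congr rfl fun d _ => Finset.sum_congr rfl fun a _ => Finset.sum_comm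
  -- the weight function on lines
  set v : QfAux.Ln Q → ℝ := fun ℓ => ∑ cb ∈ T, if lineOf cb = ℓ then (1:ℝ) else 0 with hv
  have sum_v : ∀ f : QfAux.Ln Q → ℝ,
      ∑ ℓ : QfAux.Ln Q, v ℓ * f ℓ = ∑ cb ∈ T, f (lineOf cb) := by
    intro f
    rw [hv]
    exact QfAux.sum_v_gen T lineOf f
  have vsum : ∑ ℓ : QfAux.Ln Q, v ℓ = (T.card : ℝ) := by
    have h := sum_v (fun _ => 1)
    simpa using h
  have vsq : ∑ ℓ : QfAux.Ln Q, v ℓ ^ 2 = (T.card : ℝ) := by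
    have h1 : ∑ ℓ : QfAux.Ln Q, v ℓ ^ 2 = ∑ cb ∈ T, v (lineOf cb) := by
      rw [← sum_v v]
      exact Finset.sum_congr rfl fun ℓ _ => pow_two (v ℓ)
    rw [h1]
    have h2 : ∀ cb ∈ T, v (lineOf cb) = 1 := fun cb hcb =>
      QfAux.v_apply_self T lineOf hinj hcb
    rw [Finset.sum_congr rfl h2]
    simp
  -- the centered column sums
  set g : QfAux.Ln Q → ℝ :=
    fun ℓ => (∑ p ∈ S, QfAux.mval p ℓ) - (qr + 1) / n * S.card with hg
  have key1 : ∑ ℓ : QfAux.Ln Q, (∑ p ∈ S, QfAux.mval p ℓ) = (qr + 1) * S.card := by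
    rw [Finset.sum_comm]
    rw [Finset.sum_congr rfl fun p _ => QfAux.row_sum p]
    rw [Finset.sum_const, nsmul_eq_mul]
    ring
  have key2 : ∑ ℓ : QfAux.Ln Q, (∑ p ∈ S, QfAux.mval p ℓ) ^ 2
      = qr * S.card + (S.card : ℝ) ^ 2 := by
    have expand : ∀ ℓ : QfAux.Ln Q, (∑ p ∈ S, QfAux.mval p ℓ) ^ 2
        = ∑ p ∈ S, ∑ p' ∈ S, QfAux.mval p ℓ * QfAux.mval p' ℓ := by
      intro ℓ
      rw [sq, Finset.sum_mul_sum]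
    rw [Finset.sum_congr rfl fun ℓ _ => expand ℓ]
    rw [Finset.sum_comm]
    have swap2 : ∀ p ∈ S, ∑ ℓ : QfAux.Ln Q, ∑ p' ∈ S, QfAux.mval p ℓ * QfAux.mval p' ℓ
        = ∑ p' ∈ S, (qr * (if p = p' then (1:ℝ) else 0) + 1) := by
      intro p _
      rw [Finset.sum_comm]
      refine Finset.sum_congr rfl fun p' _ => ?_
      by_cases h : p = p'
      · subst h
        rw [Finset.sum_congr rfl fun ℓ _ => QfAux.mval_sq p ℓ, QfAux.row_sum, if_pos rfl]
        ring
      · rw [QfAux.col_corr p p' h, if_neg h]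
        ring
    rw [Finset.sum_congr rfl swap2]
    have inner : ∀ p ∈ S, ∑ p' ∈ S, (qr * (if p = p' then (1:ℝ) else 0) + 1)
        = qr + S.card := by
      intro p hp
      rw [Finset.sum_add_distrib, ← Finset.mul_sum, Finset.sum_ite_eq, if_pos hp,
        Finset.sum_const, nsmul_eq_mul]
      ring
    rw [Finset.sum_congr rfl inner, Finset.sum_const, nsmul_eq_mul]
    ring
  have cardL : (Fintype.card (QfAux.Ln Q) : ℝ) = n := by rw [QfAux.card_Ln]
  have key3 : ∑ ℓ : QfAux.Ln Q, g ℓ ^ 2 ≤ qr * S.card := by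
    have expand : ∀ ℓ : QfAux.Ln Q, g ℓ ^ 2
        = (∑ p ∈ S, QfAux.mval p ℓ) ^ 2
          - 2 * ((qr + 1) / n * S.card) * (∑ p ∈ S, QfAux.mval p ℓ)
          + ((qr + 1) / n * S.card) ^ 2 := by
      intro ℓ
      rw [hg]
      ring
    rw [Finset.sum_congr rfl fun ℓ _ => expand ℓ]
    rw [Finset.sum_add_distrib, Finset.sum_sub_distrib, key2, ← Finset.mul_sum, key1,
      Finset.sum_const, nsmul_eq_mul, Finset.card_univ, cardL]
    have hne : n ≠ 0 := ne_of_gt hn0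
    have hid : qr * S.card + (S.card : ℝ) ^ 2
        - 2 * ((qr + 1) / n * S.card) * ((qr + 1) * S.card)
        + n * ((qr + 1) / n * S.card) ^ 2
        = qr * S.card - qr * (S.card : ℝ) ^ 2 / n := by
      field_simp
      rw [hn]
      ring
    rw [hid]
    have : (0:ℝ) ≤ qr * (S.card : ℝ) ^ 2 / n := by positivity
    linarith
  -- the main decomposition
  have main : (N : ℝ) - (qr + 1) / n * S.card * T.card = ∑ ℓ : QfAux.Ln Q, v ℓ * g ℓ := by
    have expand : ∀ ℓ : QfAux.Ln Q, v ℓ * g ℓ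
        = v ℓ * (∑ p ∈ S, QfAux.mval p ℓ) - (qr + 1) / n * S.card * v ℓ := by
      intro ℓ
      rw [hg]
      ring
    rw [Finset.sum_congr rfl fun ℓ _ => expand ℓ, Finset.sum_sub_distrib,
      sum_v (fun ℓ => ∑ p ∈ S, QfAux.mval p ℓ), ← Finset.mul_sum, vsum]
    rw [hNval, Finset.sum_comm]
  -- Cauchy–Schwarz
  have hcs : (∑ ℓ : QfAux.Ln Q, v ℓ * g ℓ) ^ 2 ≤ (T.card : ℝ) * (qr * S.card) := by
    calc (∑ ℓ : QfAux.Ln Q, v ℓ * g ℓ) ^ 2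
        ≤ (∑ ℓ : QfAux.Ln Q, v ℓ ^ 2) * ∑ ℓ : QfAux.Ln Q, g ℓ ^ 2 :=
          Finset.sum_mul_sq_le_sq_mul_sq _ _ _
      _ ≤ (T.card : ℝ) * (qr * S.card) := by
          rw [vsq]
          exact mul_le_mul_of_nonneg_left key3 (Nat.cast_nonneg _)
  have habs : |(N : ℝ) - (qr + 1) / n * S.card * T.card|
      ≤ Real.sqrt qr * Real.sqrt ((S.card : ℝ) * T.card) := by
    rw [main, ← Real.sqrt_sq_eq_abs]
    calc Real.sqrt ((∑ ℓ : QfAux.Ln Q, v ℓ * g ℓ) ^ 2)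
        ≤ Real.sqrt ((T.card : ℝ) * (qr * S.card)) := Real.sqrt_le_sqrt hcs
      _ = Real.sqrt qr * Real.sqrt ((S.card : ℝ) * T.card) := by
          rw [show (T.card : ℝ) * (qr * S.card) = qr * ((S.card : ℝ) * T.card) by ring,
            Real.sqrt_mul hqr0]
  have hScard : (S.card : ℝ) = (D.card : ℝ) * A.card := by
    rw [hS, Finset.card_product]
    push_cast
    ring
  have hTcard : (T.card : ℝ) = (C.card : ℝ) * B.card := by
    rw [hT, Finset.card_product]
    push_cast
    ring
  have e1 : (qr + 1) / n * S.card * T.card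
      = (qr + 1) * A.card * B.card * C.card * D.card / n := by
    rw [hScard, hTcard]
    ring
  have e2 : (S.card : ℝ) * T.card = (A.card : ℝ) * B.card * C.card * D.card := by
    rw [hScard, hTcard]
    ring
  rw [e1, e2] at habs
  exact habs
end

section
/- Let Q be a finite (left) quasifield with q elements and let A, B, C, D ⊆ Q with |A|·|B|·|C|·|D| > q³. Then every element γ ∈ Q can be written as γ = a + b + c·d with a ∈ A, b ∈ B, c ∈ C, d ∈ D; that is, Q = A + B + C·D. -/
/-- Auxiliary counting lemma: if `γ` is not representable as `a + b + c*d`, then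
`|A||B||C||D| ≤ q³`.  Proved by an elementary point-line incidence count:
lines `y = c·x + a` for `(c,a) ∈ C × A`, points `(d, γ - b)` for `(d,b) ∈ D × B`. -/
theorem qf_aux {Q : Type*} [Quasifield Q] [Fintype Q] [DecidableEq Q]
    (A B C D : Finset Q) (γ : Q)
    (hcon : ∀ a ∈ A, ∀ b ∈ B, ∀ c ∈ C, ∀ d ∈ D, γ ≠ a + b + c * d) :
    (A.card : ℤ) * B.card * C.card * D.card ≤ (Fintype.card Q : ℤ) ^ 3 := by
  classical
  set q : ℤ := (Fintype.card Q : ℤ) with hq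
  have hq0 : 0 ≤ q := Int.natCast_nonneg _
  set Ls : Finset (Q × Q) := C ×ˢ A with hLs
  set L : ℤ := (Ls.card : ℤ) with hL
  have hL0 : 0 ≤ L := Int.natCast_nonneg _
  set f : Q × Q → Q × Q → ℤ := fun l p => if p.2 = l.1 * p.1 + l.2 then 1 else 0 with hf
  set m : Q × Q → ℤ := fun p => ∑ l ∈ Ls, f l p with hm
  -- each line has exactly q points
  have line_q : ∀ l : Q × Q, (∑ p : Q × Q, f l p) = q := by
    intro l
    simp only [hf]
    rw [Finset.sum_boole]
    have himg : Finset.univ.filter (fun p : Q × Q => p.2 = l.1 * p.1 + l.2)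
        = Finset.univ.image (fun x : Q => (x, l.1 * x + l.2)) := by
      ext p
      simp only [Finset.mem_filter, Finset.mem_univ, true_and, Finset.mem_image]
      constructor
      · intro hp
        exact ⟨p.1, Prod.ext rfl hp.symm⟩
      · rintro ⟨x, rfl⟩
        rfl
    rw [himg, Finset.card_image_of_injective _ (fun x y hxy => congrArg Prod.fst hxy),
      Finset.card_univ, hq]
  -- two distinct lines meet in at most one point
  have pair_le : ∀ (l l' : Q × Q), l ≠ l' → (∑ p : Q × Q, f l p * f l' p) ≤ 1 := by
    intro l l' hne
    have hprod : ∀ p : Q × Q, f l p * f l' p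
        = if (p.2 = l.1 * p.1 + l.2 ∧ p.2 = l'.1 * p.1 + l'.2) then (1 : ℤ) else 0 := by
      intro p
      simp only [hf]
      by_cases h1 : p.2 = l.1 * p.1 + l.2 <;> by_cases h2 : p.2 = l'.1 * p.1 + l'.2 <;>
        simp [h1, h2]
    rw [Finset.sum_congr rfl (fun p _ => hprod p), Finset.sum_boole]
    have hcard : (Finset.univ.filter
        (fun p : Q × Q => p.2 = l.1 * p.1 + l.2 ∧ p.2 = l'.1 * p.1 + l'.2)).card ≤ 1 := by
      apply Finset.card_le_one.mpr
      intro p hp p' hp'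
      simp only [Finset.mem_filter, Finset.mem_univ, true_and] at hp hp'
      by_cases hc : l.1 = l'.1
      · exfalso
        have e := hp.1.symm.trans hp.2
        rw [hc] at e
        exact hne (Prod.ext hc (add_left_cancel e))
      · obtain ⟨x, -, hux⟩ := Quasifield.existsUnique_affine l.1 l'.1 (l'.2 - l.2) hc
        have key : ∀ r : Q × Q, r.2 = l.1 * r.1 + l.2 → r.2 = l'.1 * r.1 + l'.2 → r.1 = x := by
          intro r h1 h2
          apply hux
          calc l.1 * r.1 = (l.1 * r.1 + l.2) - l.2 := by abel
            _ = (l'.1 * r.1 + l'.2) - l.2 := by rw [← h1, h2]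
            _ = l'.1 * r.1 + (l'.2 - l.2) := by abel
        have h1 : p.1 = p'.1 := (key p hp.1 hp.2).trans (key p' hp'.1 hp'.2).symm
        have h2 : p.2 = p'.2 := by rw [hp.1, hp'.1, h1]
        exact Prod.ext h1 h2
    exact_mod_cast hcard
  -- first moment
  have S1 : (∑ p : Q × Q, m p) = L * q := by
    simp only [hm]
    rw [Finset.sum_comm, Finset.sum_congr rfl (fun l _ => line_q l), Finset.sum_const,
      nsmul_eq_mul, hL]
  -- second moment
  have S2 : (∑ p : Q × Q, (m p) ^ 2) ≤ L * (q + L) := by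
    have expand : ∀ p : Q × Q, (m p) ^ 2 = ∑ l ∈ Ls, ∑ l' ∈ Ls, f l p * f l' p := by
      intro p
      simp only [hm]
      rw [sq, Finset.sum_mul_sum]
    rw [Finset.sum_congr rfl (fun p _ => expand p), Finset.sum_comm]
    have swap2 : ∀ l ∈ Ls, (∑ p : Q × Q, ∑ l' ∈ Ls, f l p * f l' p)
        = ∑ l' ∈ Ls, ∑ p : Q × Q, f l p * f l' p := fun l _ => Finset.sum_comm
    rw [Finset.sum_congr rfl swap2]
    have inner : ∀ l ∈ Ls, (∑ l' ∈ Ls, ∑ p : Q × Q, f l p * f l' p) ≤ q + L := by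
      intro l hl
      rw [← Finset.add_sum_erase Ls _ hl]
      have hdiag : (∑ p : Q × Q, f l p * f l p) = q := by
        have : ∀ p : Q × Q, f l p * f l p = f l p := by
          intro p
          simp only [hf]
          split_ifs <;> norm_num
        rw [Finset.sum_congr rfl (fun p _ => this p)]
        exact line_q l
      have hrest : (∑ l' ∈ Ls.erase l, ∑ p : Q × Q, f l p * f l' p) ≤ L := by
        calc (∑ l' ∈ Ls.erase l, ∑ p : Q × Q, f l p * f l' p)
            ≤ ∑ _l' ∈ Ls.erase l, (1 : ℤ) := by
              apply Finset.sum_le_sum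
              intro l' hl'
              exact pair_le l l' (Finset.ne_of_mem_erase hl').symm
          _ = ((Ls.erase l).card : ℤ) := by rw [Finset.sum_const, nsmul_eq_mul, mul_one]
          _ ≤ L := by
              rw [hL]
              exact_mod_cast Finset.card_le_card (Finset.erase_subset _ _)
      rw [hdiag]
      linarith
    calc (∑ l ∈ Ls, ∑ l' ∈ Ls, ∑ p : Q × Q, f l p * f l' p)
        ≤ ∑ _l ∈ Ls, (q + L) := Finset.sum_le_sum inner
      _ = L * (q + L) := by rw [Finset.sum_const, nsmul_eq_mul, hL]
  -- the deviation sum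
  have hcardQQ : ((Fintype.card (Q × Q) : ℤ)) = q * q := by
    rw [Fintype.card_prod, hq]
    push_cast
    ring
  have keyineq : (∑ p : Q × Q, (q * m p - L) ^ 2) ≤ q ^ 3 * L := by
    have e : (∑ p : Q × Q, (q * m p - L) ^ 2)
        = q ^ 2 * (∑ p : Q × Q, (m p) ^ 2) - 2 * q * L * (∑ p : Q × Q, m p)
          + (Fintype.card (Q × Q) : ℤ) * L ^ 2 := by
      have hterm : ∀ p : Q × Q, (q * m p - L) ^ 2
          = q ^ 2 * (m p) ^ 2 - 2 * q * L * (m p) + L ^ 2 := fun p => by ring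
      rw [Finset.sum_congr rfl (fun p _ => hterm p), Finset.sum_add_distrib,
        Finset.sum_sub_distrib, ← Finset.mul_sum, ← Finset.mul_sum, Finset.sum_const,
        nsmul_eq_mul, Finset.card_univ]
    rw [e, S1, hcardQQ]
    nlinarith [mul_le_mul_of_nonneg_left S2 (sq_nonneg q)]
  -- the point set
  set Ps : Finset (Q × Q) := D ×ˢ (B.image fun b => γ - b) with hPs
  have hm0 : ∀ p ∈ Ps, m p = 0 := by
    intro p hp
    rw [hPs] at hp
    simp only [Finset.mem_product, Finset.mem_image] at hp
    obtain ⟨hd, b, hb, hpb⟩ := hp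
    simp only [hm]
    apply Finset.sum_eq_zero
    intro l hl
    rw [hLs] at hl
    simp only [Finset.mem_product] at hl
    simp only [hf]
    rw [if_neg]
    intro heq
    apply hcon l.2 hl.2 b hb l.1 hl.1 p.1 hd
    rw [← hpb] at heq
    -- heq : γ - b = l.1 * p.1 + l.2
    have : γ = (l.1 * p.1 + l.2) + b := by
      rw [← heq]; abel
    rw [this]; abel
  have hPsum : (Ps.card : ℤ) * L ^ 2 ≤ ∑ p : Q × Q, (q * m p - L) ^ 2 := by
    have hps : (∑ p ∈ Ps, (q * m p - L) ^ 2) = (Ps.card : ℤ) * L ^ 2 := by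
      rw [Finset.sum_congr rfl (fun p hp => by rw [hm0 p hp, mul_zero, zero_sub, neg_sq]),
        Finset.sum_const, nsmul_eq_mul]
    rw [← hps]
    exact Finset.sum_le_sum_of_subset_of_nonneg (Finset.subset_univ _)
      (fun p _ _ => sq_nonneg _)
  have main : (Ps.card : ℤ) * L ^ 2 ≤ q ^ 3 * L := hPsum.trans keyineq
  have hPcard : (Ps.card : ℤ) = (D.card : ℤ) * B.card := by
    rw [hPs, Finset.card_product, Finset.card_image_of_injective _ sub_right_injective]
    push_cast
    ring
  have hLcard : L = (C.card : ℤ) * A.card := by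
    rw [hL, hLs, Finset.card_product]
    push_cast
    ring
  rcases eq_or_lt_of_le hL0 with hLz | hLpos
  · -- L = 0, so C or A is empty and the product is 0
    have h0 : (A.card : ℤ) * B.card * C.card * D.card = ((C.card : ℤ) * A.card)
        * ((B.card : ℤ) * D.card) := by ring
    rw [h0, ← hLcard, ← hLz, zero_mul]
    positivity
  · have step : (Ps.card : ℤ) * L ≤ q ^ 3 := by
      have h2 : ((Ps.card : ℤ) * L) * L ≤ (q ^ 3) * L := by nlinarith [main]
      exact le_of_mul_le_mul_right h2 hLpos
    calc (A.card : ℤ) * B.card * C.card * D.card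
        = ((D.card : ℤ) * B.card) * ((C.card : ℤ) * A.card) := by ring
      _ = (Ps.card : ℤ) * L := by rw [hPcard, hLcard]
      _ ≤ q ^ 3 := step

/-- Corollary 1.10: if `|A||B||C||D| > q³`, then every `γ ∈ Q` can be written as
`γ = a + b + c·d` with `(a,b,c,d) ∈ A×B×C×D`; that is, `Q = A + B + C·D`. -/
theorem stmt_6 {Q : Type*} [Quasifield Q] [Fintype Q] [DecidableEq Q]
    (A B C D : Finset Q)
    (h : (Fintype.card Q) ^ 3 < A.card * B.card * C.card * D.card) :
    ∀ γ : Q, ∃ a ∈ A, ∃ b ∈ B, ∃ c ∈ C, ∃ d ∈ D, γ = a + b + c * d := by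
  intro γ
  by_contra hcon
  push_neg at hcon
  have key := qf_aux A B C D γ hcon
  have hZ : ((Fintype.card Q : ℤ)) ^ 3 < (A.card : ℤ) * B.card * C.card * D.card := by
    exact_mod_cast h
  linarith
end

section
/- Let Q be a finite (left) quasifield with q elements and kernel K. If A, B, C, D ⊆ Q satisfy |A|·|B|·|C|·|D| > q⁴/(|K|−1), then every γ ∈ Q\{0} can be written as γ = a·b + c·d with a ∈ A, b ∈ B, c ∈ C, d ∈ D; that is, Q\{0} ⊆ A·B + C·D. -/
/-!
Write `u · p = u₁ p₁ + u₂ p₂` for `u, p ∈ Q²`. For `p ≠ 0` exactly `q` pairs `u` satisfy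
`u · p = γ`, and for `u ≠ v` exactly `q` points `p` satisfy `u · p = v · p`. Hence, for `x`
of mean zero on `Q²`, the functions `F_δ(p) = ∑_{u · p = δ} x(u)` satisfy
`∑_δ ‖F_δ‖² = (q² - q) ‖x‖²`. Scaling points by a nonzero kernel element `t` turns `F_γ`
into `F_{γt}`, so the `|K| - 1` distinct values `γt` all carry the same mass and
`(|K| - 1) ‖F_γ‖² ≤ (q² - q) ‖x‖²`. Applied to the centred indicator of `A × C` and
summed over `p ∈ (B × D) \ {0}` with Cauchy–Schwarz, this bounds the deviation of the
number of solutions of `a b + c d = γ` from its expected value `|A||B||C||D| / q`; under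
the size hypothesis the deviation is too small for that number to vanish.
-/

open Finset Function

section FiniteAddGroup

variable {G : Type*} [AddCommGroup G] [Fintype G] [DecidableEq G]

theorem card_filter_add_eq_of_injective_left {g : G → G} (hg : Injective g) (h : G → G)
    (γ : G) : #{u : G × G | g u.1 + h u.2 = γ} = Fintype.card G := by
  let e := Equiv.ofBijective g hg.bijective_of_finite
  have hfilter : ({u : G × G | g u.1 + h u.2 = γ} : Finset (G × G)) =
      univ.image fun c => (e.symm (γ - h c), c) := by
    ext ⟨a, c⟩
    simp [e, Equiv.eq_symm_apply, eq_sub_iff_add_eq, eq_comm]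
  rw [hfilter, card_image_of_injective _ fun c c' hcc' => congrArg Prod.snd hcc', card_univ]

theorem card_filter_add_eq_of_injective_right (g : G → G) {h : G → G} (hh : Injective h)
    (γ : G) : #{u : G × G | g u.1 + h u.2 = γ} = Fintype.card G := by
  rw [← card_filter_add_eq_of_injective_left hh g γ]
  refine card_equiv (Equiv.prodComm G G) fun u => ?_
  simp [add_comm]

end FiniteAddGroup

theorem sum_sq_sum_fiber {ι κ R : Type*} [Fintype ι] [Fintype κ] [DecidableEq κ]
    [CommSemiring R] (f : ι → κ) (x : ι → R) :
    ∑ δ, (∑ u with f u = δ, x u) ^ 2 = ∑ u, ∑ v, if f u = f v then x u * x v else 0 := by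
  calc ∑ δ, (∑ u with f u = δ, x u) ^ 2
      = ∑ δ, ∑ u with f u = δ, ∑ v with f v = f u, x u * x v := by
        refine sum_congr rfl fun δ _ => ?_
        rw [sq, sum_mul_sum]
        refine sum_congr rfl fun u hu => ?_
        rw [(mem_filter.1 hu).2]
    _ = ∑ u, ∑ v with f v = f u, x u * x v := sum_fiberwise _ f _
    _ = ∑ u, ∑ v, if f u = f v then x u * x v else 0 := by
        simp only [sum_filter, eq_comm]

section Variance

variable {α : Type*} [Fintype α] [DecidableEq α] [Nonempty α]

theorem sum_indicator_sub_mean (S : Finset α) :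
    ∑ a, ((if a ∈ S then 1 else 0) - (#S : ℝ) / Fintype.card α) = 0 := by
  have hα : (Fintype.card α : ℝ) ≠ 0 := Nat.cast_ne_zero.2 Fintype.card_ne_zero
  rw [sum_sub_distrib, sum_boole, filter_mem_eq_inter, univ_inter, sum_const, card_univ,
    nsmul_eq_mul, mul_div_cancel₀ _ hα, sub_self]

theorem sum_sq_indicator_sub_mean (S : Finset α) :
    ∑ a, ((if a ∈ S then 1 else 0) - (#S : ℝ) / Fintype.card α) ^ 2 =
      #S - (#S : ℝ) ^ 2 / Fintype.card α := by
  set m := (#S : ℝ) / Fintype.card α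
  have hα : (Fintype.card α : ℝ) ≠ 0 := Nat.cast_ne_zero.2 Fintype.card_ne_zero
  have hterm : ∀ a, ((if a ∈ S then 1 else 0) - m) ^ 2 =
      (1 - 2 * m) * (if a ∈ S then 1 else 0) + m ^ 2 := fun a => by
    split_ifs <;> ring
  simp only [hterm, sum_add_distrib, ← mul_sum, sum_boole, filter_mem_eq_inter, univ_inter,
    sum_const, card_univ, nsmul_eq_mul, m]
  field_simp
  ring

end Variance

namespace Quasifield

variable {Q : Type*} [Quasifield Q]

def mulLeft (a : Q) : Q →+ Q where
  toFun := (a * ·)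
  map_zero' := Quasifield.mul_zero a
  map_add' := Quasifield.left_distrib a

theorem mul_eq_zero {a b : Q} : a * b = 0 ↔ a = 0 ∨ b = 0 := by
  refine ⟨fun h => ?_, ?_⟩
  · by_contra! hab
    exact Quasifield.mul_ne_zero a b hab.1 hab.2 h
  · rintro (rfl | rfl)
    exacts [Quasifield.zero_mul b, Quasifield.mul_zero a]

theorem mul_right_injective₀ {a : Q} (ha : a ≠ 0) : Injective (a * ·) :=
  (injective_iff_map_eq_zero (mulLeft a)).2 fun _ hx => (mul_eq_zero.1 hx).resolve_left ha

theorem mul_left_injective₀ {b : Q} (hb : b ≠ 0) : Injective (· * b) := by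
  intro x y hxy
  simp only at hxy
  by_cases hx : x * b = 0
  · have hy : y * b = 0 := hxy ▸ hx
    rw [(mul_eq_zero.1 hx).resolve_right hb, (mul_eq_zero.1 hy).resolve_right hb]
  · exact (Quasifield.existsUnique_mul_right b (x * b) hb hx).unique rfl hxy.symm

theorem injective_mul_sub_mul {a b : Q} (hab : a ≠ b) : Injective fun s => a * s - b * s :=
  (injective_iff_map_eq_zero (mulLeft a - mulLeft b)).2 fun s hs => by
    have hs' : a * s = b * s + 0 := by
      simpa [mulLeft, sub_eq_zero] using hs
    have h0 : a * 0 = b * 0 + 0 := by simp [Quasifield.mul_zero]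
    exact (Quasifield.existsUnique_affine a b 0 hab).unique hs' h0

theorem zero_mem_kernel : (0 : Q) ∈ kernel Q :=
  ⟨fun _ _ => by simp only [Quasifield.mul_zero, add_zero],
    fun _ _ => by simp only [Quasifield.mul_zero]⟩

theorem one_mem_kernel : (1 : Q) ∈ kernel Q :=
  ⟨fun _ _ => by simp only [Quasifield.mul_one], fun _ _ => by simp only [Quasifield.mul_one]⟩

theorem two_le_ncard_kernel [Finite Q] : 2 ≤ (kernel Q).ncard := by
  rw [← Set.ncard_pair (Quasifield.one_ne_zero (Q := Q)).symm]
  exact Set.ncard_le_ncard (Set.insert_subset zero_mem_kernel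
    (Set.singleton_subset_iff.2 one_mem_kernel))

def pairing (u p : Q × Q) : Q := u.1 * p.1 + u.2 * p.2

theorem pairing_mul_of_mem_kernel (u p : Q × Q) {t : Q} (ht : t ∈ kernel Q) :
    pairing u (p.1 * t, p.2 * t) = pairing u p * t := by
  rw [pairing, pairing, ht.1, ht.2, ht.2]

variable [Fintype Q] [DecidableEq Q]

theorem card_filter_pairing_eq {p : Q × Q} (hp : p ≠ 0) (γ : Q) :
    #{u | pairing u p = γ} = Fintype.card Q := by
  by_cases hp₁ : p.1 = 0
  · have hp₂ : p.2 ≠ 0 := fun hp₂ => hp (Prod.ext hp₁ hp₂)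
    exact card_filter_add_eq_of_injective_right (· * p.1) (mul_left_injective₀ hp₂) γ
  · exact card_filter_add_eq_of_injective_left (mul_left_injective₀ hp₁) (· * p.2) γ

theorem card_filter_pairing_eq_pairing {u v : Q × Q} (huv : u ≠ v) :
    #{p | pairing u p = pairing v p} = Fintype.card Q := by
  have hdiff : ∀ p : Q × Q, pairing u p = pairing v p ↔
      (u.1 * p.1 - v.1 * p.1) + (u.2 * p.2 - v.2 * p.2) = 0 := fun p => by
    rw [← sub_eq_zero, pairing, pairing]
    abel_nf
  simp_rw [hdiff]
  by_cases hu₁ : u.1 = v.1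
  · have hu₂ : u.2 ≠ v.2 := fun hu₂ => huv (Prod.ext hu₁ hu₂)
    exact card_filter_add_eq_of_injective_right (fun s => u.1 * s - v.1 * s)
      (injective_mul_sub_mul hu₂) 0
  · exact card_filter_add_eq_of_injective_left (injective_mul_sub_mul hu₁)
      (fun s => u.2 * s - v.2 * s) 0

variable (x : Q × Q → ℝ)

def incidenceSum (δ : Q) (p : Q × Q) : ℝ := ∑ u with pairing u p = δ, x u

theorem sum_sum_sq_incidenceSum (hx : ∑ u, x u = 0) :
    ∑ δ, ∑ p, incidenceSum x δ p ^ 2 =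
      ((Fintype.card Q : ℝ) ^ 2 - Fintype.card Q) * ∑ u, x u ^ 2 := by
  set q : ℝ := (Fintype.card Q : ℝ)
  have hcount : ∀ u v : Q × Q, ∑ p, (if pairing u p = pairing v p then (1 : ℝ) else 0) =
      q + (q ^ 2 - q) * if u = v then 1 else 0 := fun u v => by
    rw [sum_boole]
    by_cases huv : u = v
    · simp [huv, q, sq]
    · simp [huv, card_filter_pairing_eq_pairing huv, q]
  calc ∑ δ, ∑ p, incidenceSum x δ p ^ 2
      = ∑ p, ∑ u, ∑ v, if pairing u p = pairing v p then x u * x v else 0 := by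
        rw [sum_comm]
        exact sum_congr rfl fun p _ => sum_sq_sum_fiber (pairing · p) x
    _ = ∑ u, ∑ v, x u * x v * ∑ p, (if pairing u p = pairing v p then (1 : ℝ) else 0) := by
        rw [sum_comm]
        refine sum_congr rfl fun u _ => ?_
        rw [sum_comm]
        simp only [mul_sum, mul_boole]
    _ = q * (∑ u, x u) ^ 2 + (q ^ 2 - q) * ∑ u, x u ^ 2 := by
        rw [sq, sum_mul_sum, mul_sum, mul_sum, ← sum_add_distrib]
        refine sum_congr rfl fun u _ => ?_
        have hterm : ∀ v, x u * x v * (q + (q ^ 2 - q) * if u = v then 1 else 0) =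
            q * (x u * x v) + if u = v then (q ^ 2 - q) * x u ^ 2 else 0 := fun v => by
          split_ifs with huv
          · subst huv; ring
          · ring
        simp only [hcount, hterm, sum_add_distrib, mul_sum, sum_ite_eq, mem_univ, if_true]
    _ = (q ^ 2 - q) * ∑ u, x u ^ 2 := by rw [hx]; ring

theorem sum_sq_incidenceSum_mul_of_mem_kernel {t : Q} (ht : t ∈ kernel Q) (ht₀ : t ≠ 0)
    (δ : Q) : ∑ p, incidenceSum x (δ * t) p ^ 2 = ∑ p, incidenceSum x δ p ^ 2 := by
  let e := Equiv.ofBijective (· * t) (mul_left_injective₀ ht₀).bijective_of_finite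
  refine (Fintype.sum_equiv (e.prodCongr e) _ _ fun p => ?_).symm
  simp only [incidenceSum, Equiv.prodCongr_apply, Prod.map, e, Equiv.ofBijective_apply,
    pairing_mul_of_mem_kernel _ _ ht, (mul_left_injective₀ ht₀).eq_iff]

theorem ncard_kernel_sub_one_mul_sum_sq_le {γ : Q} (hγ : γ ≠ 0) (hx : ∑ u, x u = 0) :
    ((kernel Q).ncard - 1 : ℝ) * ∑ p, incidenceSum x γ p ^ 2 ≤
      ((Fintype.card Q : ℝ) ^ 2 - Fintype.card Q) * ∑ u, x u ^ 2 := by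
  classical
  set mass : Q → ℝ := fun δ => ∑ p, incidenceSum x δ p ^ 2
  let units : Finset Q := (kernel Q).toFinset.erase 0
  have hunits : (#units : ℝ) = (kernel Q).ncard - 1 := by
    have h0 : (0 : Q) ∈ (kernel Q).toFinset := Set.mem_toFinset.2 zero_mem_kernel
    rw [card_erase_of_mem h0, Nat.cast_sub (card_pos.2 ⟨0, h0⟩), ← Set.ncard_eq_toFinset_card',
      Nat.cast_one]
  calc ((kernel Q).ncard - 1 : ℝ) * mass γ
      = ∑ t ∈ units, mass (γ * t) := by
        rw [← hunits, ← nsmul_eq_mul, ← sum_const]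
        refine sum_congr rfl fun t ht => ?_
        obtain ⟨ht₀, ht⟩ := mem_erase.1 ht
        exact (sum_sq_incidenceSum_mul_of_mem_kernel x (Set.mem_toFinset.1 ht) ht₀ γ).symm
    _ = ∑ δ ∈ units.image (γ * ·), mass δ :=
        (sum_image fun _ _ _ _ h => mul_right_injective₀ hγ h).symm
    _ ≤ ∑ δ, mass δ :=
        sum_le_sum_of_subset_of_nonneg (subset_univ _) fun _ _ _ => by positivity
    _ = _ := sum_sum_sq_incidenceSum x hx

theorem ncard_kernel_sub_one_mul_incidence_deviation_sq_le {γ : Q} (hγ : γ ≠ 0)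
    (S P : Finset (Q × Q)) (hP : 0 ∉ P) :
    ((kernel Q).ncard - 1 : ℝ) *
        (∑ p ∈ P, (#{u ∈ S | pairing u p = γ} : ℝ) - #S * #P / Fintype.card Q) ^ 2 ≤
      ((Fintype.card Q : ℝ) ^ 2 - Fintype.card Q) * #P *
        (#S - (#S : ℝ) ^ 2 / Fintype.card Q ^ 2) := by
  set q : ℝ := (Fintype.card Q : ℝ) with hq_def
  have hq : q ≠ 0 := Nat.cast_ne_zero.2 Fintype.card_ne_zero
  have hk : (0 : ℝ) ≤ (kernel Q).ncard - 1 :=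
    sub_nonneg.2 (by exact_mod_cast one_le_two.trans (two_le_ncard_kernel (Q := Q)))
  have hcard : (Fintype.card (Q × Q) : ℝ) = q ^ 2 := by
    rw [Fintype.card_prod, Nat.cast_mul, sq]
  set x : Q × Q → ℝ := fun u => (if u ∈ S then 1 else 0) - #S / q ^ 2
  have hx : ∑ u, x u = 0 := by simpa only [hcard] using sum_indicator_sub_mean S
  have hx₂ : ∑ u, x u ^ 2 = #S - (#S : ℝ) ^ 2 / q ^ 2 := by
    simpa only [hcard] using sum_sq_indicator_sub_mean S
  have hF : ∀ p ∈ P, incidenceSum x γ p = #{u ∈ S | pairing u p = γ} - #S / q := by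
    intro p hp
    have hp₀ : p ≠ 0 := fun h => hP (h ▸ hp)
    have hfilter : ({u | pairing u p = γ ∧ u ∈ S} : Finset (Q × Q)) =
        {u ∈ S | pairing u p = γ} := by
      ext u
      simp only [mem_filter, mem_univ, true_and, and_comm]
    rw [incidenceSum, sum_sub_distrib, sum_boole, filter_filter, hfilter, sum_const,
      card_filter_pairing_eq hp₀, nsmul_eq_mul, ← hq_def]
    field_simp
  have hdev : ∑ p ∈ P, (#{u ∈ S | pairing u p = γ} : ℝ) - #S * #P / q =
      ∑ p ∈ P, incidenceSum x γ p := by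
    rw [sum_congr rfl hF, sum_sub_distrib, sum_const, nsmul_eq_mul]
    ring
  calc ((kernel Q).ncard - 1 : ℝ) *
        (∑ p ∈ P, (#{u ∈ S | pairing u p = γ} : ℝ) - #S * #P / q) ^ 2
      ≤ ((kernel Q).ncard - 1) * (#P * ∑ p, incidenceSum x γ p ^ 2) := by
        rw [hdev]
        gcongr
        exact sq_sum_le_card_mul_sum_sq.trans (by gcongr; exact subset_univ P)
    _ = #P * (((kernel Q).ncard - 1) * ∑ p, incidenceSum x γ p ^ 2) := by ring
    _ ≤ #P * ((q ^ 2 - q) * ∑ u, x u ^ 2) :=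
        mul_le_mul_of_nonneg_left (ncard_kernel_sub_one_mul_sum_sq_le x hγ hx)
          (Nat.cast_nonneg _)
    _ = (q ^ 2 - q) * #P * (#S - (#S : ℝ) ^ 2 / q ^ 2) := by rw [hx₂]; ring

theorem ncard_kernel_sub_one_mul_card_mul_card_le {γ : Q} (hγ : γ ≠ 0) (S P : Finset (Q × Q))
    (hP : 0 ∉ P) (hSP : ∀ u ∈ S, ∀ p ∈ P, pairing u p ≠ γ) :
    ((kernel Q).ncard - 1 : ℝ) * (#S * #P) ≤
      ((Fintype.card Q : ℝ) ^ 2 - Fintype.card Q) * (Fintype.card Q ^ 2 - #S) := by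
  have hq : (1 : ℝ) ≤ Fintype.card Q := Nat.one_le_cast.2 Fintype.card_pos
  have hS : (#S : ℝ) ≤ (Fintype.card Q : ℝ) ^ 2 := by
    have := card_le_univ S
    rw [Fintype.card_prod, ← sq] at this
    exact_mod_cast this
  have hcount : ∑ p ∈ P, (#{u ∈ S | pairing u p = γ} : ℝ) = 0 :=
    sum_eq_zero fun p hp => by
      rw [card_eq_zero.2 (filter_eq_empty_iff.2 fun u hu => hSP u hu p hp), Nat.cast_zero]
  have key := ncard_kernel_sub_one_mul_incidence_deviation_sq_le hγ S P hP
  rw [hcount, zero_sub, neg_sq] at key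
  generalize (Fintype.card Q : ℝ) = q at *
  generalize ((kernel Q).ncard : ℝ) = k at *
  rcases (mul_nonneg (Nat.cast_nonneg #S) (Nat.cast_nonneg #P) : (0 : ℝ) ≤ #S * #P).eq_or_lt
    with hSP₀ | hSP₀
  · rw [← hSP₀]
    simpa using mul_nonneg (by nlinarith : 0 ≤ q ^ 2 - q) (sub_nonneg.2 hS)
  refine le_of_mul_le_mul_left ?_ hSP₀
  have hq₀ : q ≠ 0 := by positivity
  calc (#S * #P : ℝ) * ((k - 1) * (#S * #P)) = q ^ 2 * ((k - 1) * (#S * #P / q) ^ 2) := by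
        field_simp
    _ ≤ q ^ 2 * ((q ^ 2 - q) * #P * (#S - (#S : ℝ) ^ 2 / q ^ 2)) := by gcongr
    _ = #S * #P * ((q ^ 2 - q) * (q ^ 2 - #S)) := by
        field_simp

theorem ncard_kernel_sub_one_mul_card_le_of_forall_ne {γ : Q} (hγ : γ ≠ 0)
    (A B C D : Finset Q) (hABCD : ∀ a ∈ A, ∀ b ∈ B, ∀ c ∈ C, ∀ d ∈ D, a * b + c * d ≠ γ) :
    ((kernel Q).ncard - 1 : ℝ) * (#A * #B * #C * #D) ≤
      (Fintype.card Q : ℝ) ^ 4 - Fintype.card Q ^ 3 := by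
  set P := (B ×ˢ D).erase 0
  have hSP : ∀ u ∈ A ×ˢ C, ∀ p ∈ P, pairing u p ≠ γ := by
    intro u hu p hp
    obtain ⟨ha, hc⟩ := mem_product.1 hu
    obtain ⟨hb, hd⟩ := mem_product.1 (mem_of_mem_erase hp)
    exact hABCD u.1 ha p.1 hb u.2 hc p.2 hd
  have hbound := ncard_kernel_sub_one_mul_card_mul_card_le hγ _ P (notMem_erase 0 _) hSP
  rw [card_product, Nat.cast_mul] at hbound
  have hP : (#B * #D : ℝ) ≤ #P + 1 := by
    have : #(B ×ˢ D) - 1 ≤ #P := pred_card_le_card_erase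
    rw [card_product] at this
    exact_mod_cast (by omega : #B * #D ≤ #P + 1)
  have hk : (2 : ℝ) ≤ (kernel Q).ncard := by exact_mod_cast two_le_ncard_kernel
  have hkq : ((kernel Q).ncard : ℝ) ≤ Fintype.card Q := by
    exact_mod_cast (Set.ncard_le_card _).trans_eq Nat.card_eq_fintype_card
  generalize (Fintype.card Q : ℝ) = q at *
  generalize ((kernel Q).ncard : ℝ) = k at *
  have hAC : (0 : ℝ) ≤ (k - 1) * (#A * #C) := mul_nonneg (by linarith) (by positivity)
  calc (k - 1) * (#A * #B * #C * #D) = (k - 1) * (#A * #C) * (#B * #D) := by ring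
    _ ≤ (k - 1) * (#A * #C) * (#P + 1) := by gcongr
    _ = (k - 1) * (#A * #C * #P) + (k - 1) * (#A * #C) := by ring
    _ ≤ (q ^ 2 - q) * (q ^ 2 - #A * #C) + (q ^ 2 - q) * (#A * #C) :=
      add_le_add hbound (mul_le_mul_of_nonneg_right (by nlinarith) (by positivity))
    _ = q ^ 4 - q ^ 3 := by ring

end Quasifield

open Quasifield

theorem stmt_9_general {Q : Type*} [Quasifield Q] [Fintype Q]
    (A B C D : Finset Q)
    (h : (Fintype.card Q : ℝ) ^ 4 / (((Quasifield.kernel Q).ncard : ℝ) - 1) <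
      (A.card : ℝ) * B.card * C.card * D.card) :
    ∀ γ : Q, γ ≠ 0 → ∃ a ∈ A, ∃ b ∈ B, ∃ c ∈ C, ∃ d ∈ D, γ = a * b + c * d := by
  classical
  intro γ hγ
  by_contra! hcon
  have hbound := ncard_kernel_sub_one_mul_card_le_of_forall_ne hγ A B C D
    fun a ha b hb c hc d hd => (hcon a ha b hb c hc d hd).symm
  have hk : (2 : ℝ) ≤ (kernel Q).ncard := by exact_mod_cast two_le_ncard_kernel
  have hq : (0 : ℝ) < Fintype.card Q := Nat.cast_pos.2 Fintype.card_pos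
  rw [div_lt_iff₀ (by linarith)] at h
  nlinarith [pow_pos hq 3]

/-- Corollary 1.14: if `|A||B||C||D| > q⁴/(|K|-1)` then every nonzero `γ` is of the
form `a·b + c·d`; that is, `Q \ {0} ⊆ A·B + C·D`. -/
theorem stmt_9 {Q : Type*} [Quasifield Q] [Fintype Q] [DecidableEq Q]
    (A B C D : Finset Q)
    (h : (Fintype.card Q : ℝ) ^ 4 / (((Quasifield.kernel Q).ncard : ℝ) - 1) <
      (A.card : ℝ) * B.card * C.card * D.card) :
    ∀ γ : Q, γ ≠ 0 → ∃ a ∈ A, ∃ b ∈ B, ∃ c ∈ C, ∃ d ∈ D, γ = a * b + c * d :=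
  stmt_9_general A B C D h
end

section
/- (Bipartite expander mixing lemma.) Let G be a d-regular bipartite graph on 2n vertices with parts X and Y (so |X| = |Y| = n), let M be its adjacency matrix with eigenvalues d = λ₁ ≥ λ₂ ≥ ⋯ ≥ λ_{2n} = −d, and set λ = max_{i ≠ 1, 2n} |λ_i|. Then for all S ⊆ X and T ⊆ Y, |e(S,T) − d·|S|·|T|/n| ≤ λ·√(|S|·|T|), where e(S,T) is the number of edges of G with one endpoint in S and the other in T. -/
/-!
Write `𝟙_S` for the indicator vector of `S` and let `x = 𝟙_S - (|S|/n) 𝟙_X`. Since `M 𝟙_X = d 𝟙_Y`,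
`⟨x, M 𝟙_T⟩ = e(S,T) - d|S||T|/n`, and `‖x‖² ≤ |S|`. The vectors `𝟙_X + 𝟙_Y` and `𝟙_X - 𝟙_Y` are
eigenvectors for `d` and `-d`, and `x` is orthogonal to both. In an orthonormal eigenbasis of `M`
the only eigenvalues of modulus larger than `λ` are `±d`, each of multiplicity one, so `x` has no
component along them, and Cauchy–Schwarz gives `|⟨x, M 𝟙_T⟩| ≤ λ ‖x‖ ‖𝟙_T‖ ≤ λ √(|S||T|)`.
-/

open Matrix Finset

theorem eq_of_map_univ_val_eq {ι κ α : Type*} [Fintype ι] [Fintype κ] {f : ι → α} {g : κ → α}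
    (h : univ.val.map f = univ.val.map g) {a : α} (hg : ∀ j j', g j = a → g j' = a → j = j')
    {i i' : ι} (hi : f i = a) (hi' : f i' = a) : i = i' := by
  classical
  have hcard : #{i | f i = a} = #{j | g j = a} := by
    simpa [Multiset.count_map, ← filter_val, eq_comm] using congrArg (Multiset.count a) h
  have hg_card : #{j | g j = a} ≤ 1 :=
    card_le_one.mpr fun j hj j' hj' => hg j j' (by simpa using hj) (by simpa using hj')
  exact card_le_one.mp (hcard ▸ hg_card) i (by simpa using hi) i' (by simpa using hi')

theorem eq_of_lt_abs_of_eq {ι : Type*} {μ : ι → ℝ} {p q : ι} {a lam : ℝ} (hlam0 : 0 ≤ lam)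
    (hp : μ p = a) (hq : μ q = -a) (hlam : ∀ j, j ≠ p → j ≠ q → |μ j| ≤ lam) {j j' : ι}
    (hj : lam < |μ j|) (h : μ j' = μ j) : j' = j := by
  have hpq : ∀ k, lam < |μ k| → k = p ∨ k = q := fun k hk => by
    by_contra! hk'
    exact (hlam k hk'.1 hk'.2).not_gt hk
  have ha : a ≠ 0 := fun ha => by
    rcases hpq j hj with rfl | rfl <;> simp [hp, hq, ha] at hj <;> linarith
  rcases hpq j hj with rfl | rfl <;> rcases hpq j' (h ▸ hj) with rfl | rfl
  all_goals first
    | rfl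
    | rw [hp, hq] at h; exact absurd (by linarith) ha

namespace Matrix.IsHermitian

variable {ι : Type*} [Fintype ι] [DecidableEq ι] {A : Matrix ι ι ℝ} (hA : A.IsHermitian)

open Polynomial in
theorem map_eigenvalues_eq_of_charpoly_eq {κ : Type*} [Fintype κ] {μ : κ → ℝ}
    (h : A.charpoly = ∏ k, (X - C (μ k))) :
    univ.val.map hA.eigenvalues = univ.val.map μ := by
  have hroots := congrArg roots h
  rw [hA.roots_charpoly_eq_eigenvalues,
    roots_prod _ _ (prod_ne_zero_iff.mpr fun k _ => X_sub_C_ne_zero _)] at hroots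
  simpa using hroots

theorem sum_dotProduct_eigenvectorBasis_smul (x : ι → ℝ) :
    ∑ i, (x ⬝ᵥ ⇑(hA.eigenvectorBasis i)) • ⇑(hA.eigenvectorBasis i) = x := by
  simpa [EuclideanSpace.inner_eq_star_dotProduct] using
    congrArg WithLp.ofLp (hA.eigenvectorBasis.sum_repr' (WithLp.toLp 2 x))

theorem sum_dotProduct_eigenvectorBasis_mul (x y : ι → ℝ) :
    ∑ i, (x ⬝ᵥ ⇑(hA.eigenvectorBasis i)) * (y ⬝ᵥ ⇑(hA.eigenvectorBasis i)) = x ⬝ᵥ y := by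
  simpa [EuclideanSpace.inner_eq_star_dotProduct, dotProduct_comm] using
    hA.eigenvectorBasis.sum_inner_mul_inner (WithLp.toLp 2 x) (WithLp.toLp 2 y)

theorem dotProduct_mulVec_eq_sum_eigenvalues (x y : ι → ℝ) :
    x ⬝ᵥ A *ᵥ y = ∑ i, hA.eigenvalues i *
      ((x ⬝ᵥ ⇑(hA.eigenvectorBasis i)) * (y ⬝ᵥ ⇑(hA.eigenvectorBasis i))) := by
  conv_lhs => rw [← hA.sum_dotProduct_eigenvectorBasis_smul y]
  simp only [mulVec_sum, mulVec_smul, hA.mulVec_eigenvectorBasis, dotProduct_sum,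
    dotProduct_smul, smul_eq_mul]
  exact sum_congr rfl fun i _ => by ring

theorem abs_dotProduct_mulVec_le {lam : ℝ} (hlam : 0 ≤ lam) {x : ι → ℝ}
    (hx : ∀ i, lam < |hA.eigenvalues i| → x ⬝ᵥ ⇑(hA.eigenvectorBasis i) = 0) (y : ι → ℝ) :
    |x ⬝ᵥ A *ᵥ y| ≤ lam * (√(x ⬝ᵥ x) * √(y ⬝ᵥ y)) := by
  set a := fun i => x ⬝ᵥ ⇑(hA.eigenvectorBasis i)
  set b := fun i => y ⬝ᵥ ⇑(hA.eigenvectorBasis i)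
  have hterm : ∀ i, |hA.eigenvalues i * (a i * b i)| ≤ lam * (|a i| * |b i|) := by
    intro i
    rw [abs_mul, abs_mul]
    by_cases hi : lam < |hA.eigenvalues i|
    · simp [a, hx i hi]
    · exact mul_le_mul_of_nonneg_right (not_lt.mp hi) (by positivity)
  have hparseval : ∀ z : ι → ℝ, ∑ i, |z ⬝ᵥ ⇑(hA.eigenvectorBasis i)| ^ 2 = z ⬝ᵥ z := fun z => by
    simp_rw [sq_abs, sq, hA.sum_dotProduct_eigenvectorBasis_mul]
  calc |x ⬝ᵥ A *ᵥ y| = |∑ i, hA.eigenvalues i * (a i * b i)| := by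
        rw [hA.dotProduct_mulVec_eq_sum_eigenvalues]
    _ ≤ ∑ i, lam * (|a i| * |b i|) :=
        (abs_sum_le_sum_abs _ _).trans (sum_le_sum fun i _ => hterm i)
    _ = lam * ∑ i, |a i| * |b i| := by rw [mul_sum]
    _ ≤ lam * (√(∑ i, |a i| ^ 2) * √(∑ i, |b i| ^ 2)) :=
        mul_le_mul_of_nonneg_left (Real.sum_mul_le_sqrt_mul_sqrt _ _ _) hlam
    _ = lam * (√(x ⬝ᵥ x) * √(y ⬝ᵥ y)) := by rw [hparseval, hparseval]

/-- Being an eigenvector for an eigenvalue of multiplicity one, `w` is a nonzero multiple of the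
`i`-th basis vector. -/
theorem dotProduct_eigenvectorBasis_eq_zero_of_simple {i : ι}
    (hsimple : ∀ j, hA.eigenvalues j = hA.eigenvalues i → j = i) {w : ι → ℝ}
    (hw : A *ᵥ w = hA.eigenvalues i • w) (hw0 : w ≠ 0) {x : ι → ℝ} (hxw : x ⬝ᵥ w = 0) :
    x ⬝ᵥ ⇑(hA.eigenvectorBasis i) = 0 := by
  have hAT : Aᵀ = A := by rw [← conjTranspose_eq_transpose_of_trivial]; exact hA
  set c := fun j => w ⬝ᵥ ⇑(hA.eigenvectorBasis j)
  have hc : ∀ j, j ≠ i → c j = 0 := by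
    intro j hj
    have h : hA.eigenvalues j * c j = hA.eigenvalues i * c j := by
      calc hA.eigenvalues j * c j = w ⬝ᵥ Aᵀ *ᵥ ⇑(hA.eigenvectorBasis j) := by
            rw [hAT, hA.mulVec_eigenvectorBasis, dotProduct_smul, smul_eq_mul]
        _ = hA.eigenvalues i * c j := by
            rw [dotProduct_transpose_mulVec, hw, dotProduct_smul, smul_eq_mul, dotProduct_comm]
    exact (mul_eq_mul_right_iff.mp h).resolve_left fun h' => hj (hsimple j h')
  have hw_eq : w = c i • ⇑(hA.eigenvectorBasis i) := by
    conv_lhs => rw [← hA.sum_dotProduct_eigenvectorBasis_smul w]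
    exact sum_eq_single i (fun j _ hj => by simp [c, hc j hj]) (by simp)
  have hci : c i ≠ 0 := fun h => hw0 (by rw [hw_eq, h, zero_smul])
  rw [hw_eq, dotProduct_smul, smul_eq_mul] at hxw
  exact (mul_eq_zero.mp hxw).resolve_left hci

theorem dotProduct_eigenvectorBasis_eq_zero_of_lt_abs {κ : Type*} [Fintype κ] {μ : κ → ℝ}
    (hμ : univ.val.map hA.eigenvalues = univ.val.map μ) {p q : κ} {a lam : ℝ} (hlam0 : 0 ≤ lam)
    (hp : μ p = a) (hq : μ q = -a) (hlam : ∀ j, j ≠ p → j ≠ q → |μ j| ≤ lam)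
    {w₁ w₂ x : ι → ℝ} (hw₁ : A *ᵥ w₁ = a • w₁) (hw₂ : A *ᵥ w₂ = -a • w₂) (hw₁0 : w₁ ≠ 0)
    (hw₂0 : w₂ ≠ 0) (hxw₁ : x ⬝ᵥ w₁ = 0) (hxw₂ : x ⬝ᵥ w₂ = 0) :
    ∀ i, lam < |hA.eigenvalues i| → x ⬝ᵥ ⇑(hA.eigenvectorBasis i) = 0 := by
  intro i hi
  obtain ⟨j, -, hj⟩ := Multiset.mem_map.mp (hμ ▸ Multiset.mem_map_of_mem _ (mem_univ_val i))
  have hμj : lam < |μ j| := hj ▸ hi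
  have hsimple : ∀ i', hA.eigenvalues i' = hA.eigenvalues i → i' = i := fun i' hi' =>
    eq_of_map_univ_val_eq hμ (fun k k' hk hk' =>
      (eq_of_lt_abs_of_eq hlam0 hp hq hlam hμj (hk.trans hj.symm)).trans
        (eq_of_lt_abs_of_eq hlam0 hp hq hlam hμj (hk'.trans hj.symm)).symm) hi' rfl
  obtain rfl | rfl : j = p ∨ j = q := by
    by_contra! h
    exact (hlam j h.1 h.2).not_gt hμj
  · exact hA.dotProduct_eigenvectorBasis_eq_zero_of_simple hsimple (by rw [← hj, hp, hw₁]) hw₁0 hxw₁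
  · exact hA.dotProduct_eigenvectorBasis_eq_zero_of_simple hsimple (by rw [← hj, hq, hw₂]) hw₂0 hxw₂

end Matrix.IsHermitian

section Indicator

variable {V : Type*} [Fintype V]

theorem dotProduct_indicator_one (x : V → ℝ) (T : Finset V) :
    x ⬝ᵥ (T : Set V).indicator 1 = ∑ v ∈ T, x v := by
  classical
  simp [dotProduct, Set.indicator_apply, sum_ite_mem]

namespace SimpleGraph

variable {G : SimpleGraph V} [DecidableRel G.Adj]

theorem indicator_dotProduct_adjMatrix_mulVec_indicator (S T : Finset V) :
    (S : Set V).indicator 1 ⬝ᵥ G.adjMatrix ℝ *ᵥ (T : Set V).indicator 1 =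
      #{p ∈ S ×ˢ T | G.Adj p.1 p.2} := by
  rw [dotProduct_comm, dotProduct_indicator_one]
  simp only [mulVec, dotProduct_indicator_one, adjMatrix_apply]
  rw [← sum_product', sum_boole]

theorem adjMatrix_mulVec_indicator_of_isBipartiteWith {s t : Set V} (h : G.IsBipartiteWith s t)
    {d : ℕ} (hd : ∀ v ∈ t, G.degree v = d) :
    G.adjMatrix ℝ *ᵥ s.indicator 1 = (d : ℝ) • t.indicator 1 := by
  ext v
  rw [adjMatrix_mulVec_apply]
  by_cases hv : v ∈ t
  · have hnbr : ∀ u ∈ G.neighborFinset v, s.indicator (1 : V → ℝ) u = 1 := fun u hu =>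
      Set.indicator_of_mem (h.mem_of_mem_adj' hv ((G.mem_neighborFinset v u).mp hu).symm) _
    simp [sum_congr rfl hnbr, hd v hv, hv]
  · have hnbr : ∀ u ∈ G.neighborFinset v, s.indicator (1 : V → ℝ) u = 0 := fun u hu =>
      Set.indicator_of_notMem
        (fun hu' => hv (h.mem_of_mem_adj hu' (G.adj_symm ((G.mem_neighborFinset v u).mp hu)))) _
    simp [sum_congr rfl hnbr, hv]

theorem adjMatrix_mulVec_indicator_add_indicator {s t : Set V} (h : G.IsBipartiteWith s t)
    {d : ℕ} (hd : G.IsRegularOfDegree d) :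
    G.adjMatrix ℝ *ᵥ (s.indicator 1 + t.indicator 1) =
      (d : ℝ) • (s.indicator 1 + t.indicator 1) := by
  rw [mulVec_add, adjMatrix_mulVec_indicator_of_isBipartiteWith h fun v _ => hd v,
    adjMatrix_mulVec_indicator_of_isBipartiteWith h.symm fun v _ => hd v, smul_add, add_comm]

theorem adjMatrix_mulVec_indicator_sub_indicator {s t : Set V} (h : G.IsBipartiteWith s t)
    {d : ℕ} (hd : G.IsRegularOfDegree d) :
    G.adjMatrix ℝ *ᵥ (s.indicator 1 - t.indicator 1) =
      -(d : ℝ) • (s.indicator 1 - t.indicator 1) := by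
  rw [mulVec_sub, adjMatrix_mulVec_indicator_of_isBipartiteWith h fun v _ => hd v,
    adjMatrix_mulVec_indicator_of_isBipartiteWith h.symm fun v _ => hd v, neg_smul, smul_sub,
    neg_sub]

end SimpleGraph

variable [DecidableEq V]

theorem indicator_dotProduct_indicator (S T : Finset V) :
    (S : Set V).indicator 1 ⬝ᵥ (T : Set V).indicator (1 : V → ℝ) = #(S ∩ T) := by
  simp [dotProduct_indicator_one, Set.indicator_apply, inter_comm]

noncomputable def centeredIndicator (S X : Finset V) : V → ℝ :=
  (S : Set V).indicator 1 - ((#S : ℝ) / #X) • (X : Set V).indicator 1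

variable {S X : Finset V}

theorem centeredIndicator_dotProduct_indicator_self (hS : S ⊆ X) :
    centeredIndicator S X ⬝ᵥ (X : Set V).indicator 1 = 0 := by
  have hcard : (#S : ℝ) / #X * #X = #S :=
    div_mul_cancel_of_imp fun hX => by
      obtain rfl : X = ∅ := card_eq_zero.mp (by exact_mod_cast hX)
      simp [subset_empty.mp hS]
  simp [centeredIndicator, sub_dotProduct, indicator_dotProduct_indicator, inter_eq_left.mpr hS,
    hcard]

theorem centeredIndicator_dotProduct_indicator_of_disjoint (hS : S ⊆ X) {Y : Finset V}
    (hXY : Disjoint X Y) :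
    centeredIndicator S X ⬝ᵥ (Y : Set V).indicator 1 = 0 := by
  simp [centeredIndicator, sub_dotProduct, indicator_dotProduct_indicator,
    disjoint_iff_inter_eq_empty.mp hXY, disjoint_iff_inter_eq_empty.mp (hXY.mono_left hS)]

theorem centeredIndicator_dotProduct_self_le (hS : S ⊆ X) :
    centeredIndicator S X ⬝ᵥ centeredIndicator S X ≤ #S := by
  calc centeredIndicator S X ⬝ᵥ centeredIndicator S X
      = #S - (#S : ℝ) / #X * #S := by
        rw [centeredIndicator, dotProduct_sub, ← centeredIndicator, dotProduct_smul,
          centeredIndicator_dotProduct_indicator_self hS]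
        simp [centeredIndicator, sub_dotProduct, indicator_dotProduct_indicator,
          inter_eq_right.mpr hS]
    _ ≤ #S := sub_le_self _ (by positivity)

theorem SimpleGraph.centeredIndicator_dotProduct_adjMatrix_mulVec_indicator {G : SimpleGraph V}
    [DecidableRel G.Adj] {Y T : Finset V} (h : G.IsBipartiteWith X Y) {d : ℕ}
    (hd : ∀ v ∈ Y, G.degree v = d) (hT : T ⊆ Y) :
    centeredIndicator S X ⬝ᵥ G.adjMatrix ℝ *ᵥ (T : Set V).indicator 1 =
      #{p ∈ S ×ˢ T | G.Adj p.1 p.2} - (d : ℝ) * #S * #T / #X := by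
  have hXT : (X : Set V).indicator 1 ⬝ᵥ G.adjMatrix ℝ *ᵥ (T : Set V).indicator 1 = d * #T := by
    rw [← transpose_adjMatrix, dotProduct_transpose_mulVec,
      adjMatrix_mulVec_indicator_of_isBipartiteWith h hd, dotProduct_smul,
      indicator_dotProduct_indicator, inter_eq_left.mpr hT, smul_eq_mul]
  rw [centeredIndicator, sub_dotProduct, smul_dotProduct, hXT,
    indicator_dotProduct_adjMatrix_mulVec_indicator, smul_eq_mul]
  ring

end Indicator

/-- Lemma 2.3 (bipartite expander mixing lemma). Let `G` be a `d`-regular bipartite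
graph with parts `X` and `Y` of size `n`, whose adjacency matrix has eigenvalues
`μ 0 = d ≥ μ 1 ≥ ⋯ ≥ μ (2n-1) = -d` (listed with multiplicity, i.e. the
characteristic polynomial is `∏ i, (X - C (μ i))`), and let `lam` bound `|μ i|`
for all `i ≠ 0, 2n-1`.  Then for all `S ⊆ X` and `T ⊆ Y`,
`|e(S,T) - d|S||T|/n| ≤ lam·√(|S||T|)`. -/
theorem stmt_12 {V : Type*} [Fintype V] [DecidableEq V]
    (G : SimpleGraph V) [DecidableRel G.Adj]
    (X Y : Finset V) (n d : ℕ) (hn : 2 ≤ n)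
    (hdisj : Disjoint X Y)
    (hX : X.card = n)
    (hbip : ∀ u v : V, G.Adj u v → (u ∈ X ∧ v ∈ Y) ∨ (u ∈ Y ∧ v ∈ X))
    (hreg : ∀ v : V, G.degree v = d)
    (μ : Fin (2 * n) → ℝ)
    (hchar : (G.adjMatrix ℝ).charpoly = ∏ i : Fin (2 * n), (Polynomial.X - Polynomial.C (μ i)))
    (hfirst : μ ⟨0, by omega⟩ = (d : ℝ))
    (hlast : μ ⟨2 * n - 1, by omega⟩ = -(d : ℝ))
    (lam : ℝ)
    (hlam : ∀ i : Fin (2 * n), i ≠ ⟨0, by omega⟩ → i ≠ ⟨2 * n - 1, by omega⟩ → |μ i| ≤ lam)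
    (S T : Finset V) (hS : S ⊆ X) (hT : T ⊆ Y) :
    |((((S ×ˢ T).filter fun p => G.Adj p.1 p.2).card : ℝ)) -
        (d : ℝ) * S.card * T.card / n| ≤
      lam * Real.sqrt ((S.card : ℝ) * T.card) := by
  have hA := G.isHermitian_adjMatrix ℝ
  have hG : G.IsBipartiteWith X Y :=
    ⟨disjoint_coe.mpr hdisj, fun u v h => by simpa using hbip u v h⟩
  have hlam0 : 0 ≤ lam := (abs_nonneg _).trans (hlam ⟨1, by omega⟩ (by simp) (by simp; omega))
  obtain ⟨v, hvX⟩ : X.Nonempty := card_pos.mp (by omega)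
  have hvY : v ∉ Y := disjoint_left.mp hdisj hvX
  have hxX := centeredIndicator_dotProduct_indicator_self hS
  have hxY := centeredIndicator_dotProduct_indicator_of_disjoint hS hdisj
  have horth := hA.dotProduct_eigenvectorBasis_eq_zero_of_lt_abs
    (hA.map_eigenvalues_eq_of_charpoly_eq hchar) hlam0 hfirst hlast hlam
    (G.adjMatrix_mulVec_indicator_add_indicator hG hreg)
    (G.adjMatrix_mulVec_indicator_sub_indicator hG hreg)
    (fun h0 => by simpa [hvX, hvY] using congrFun h0 v)
    (fun h0 => by simpa [hvX, hvY] using congrFun h0 v)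
    (by rw [dotProduct_add, hxX, hxY, add_zero]) (by rw [dotProduct_sub, hxX, hxY, sub_zero])
  calc _ = |centeredIndicator S X ⬝ᵥ G.adjMatrix ℝ *ᵥ (T : Set V).indicator 1| := by
        rw [G.centeredIndicator_dotProduct_adjMatrix_mulVec_indicator hG (fun v _ => hreg v) hT, hX]
    _ ≤ lam * (√(centeredIndicator S X ⬝ᵥ centeredIndicator S X) *
          √((T : Set V).indicator 1 ⬝ᵥ (T : Set V).indicator 1)) :=
        hA.abs_dotProduct_mulVec_le hlam0 horth _
    _ ≤ lam * √(#S * #T) := by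
        rw [indicator_dotProduct_indicator, inter_self, ← Real.sqrt_mul' _ (Nat.cast_nonneg _)]
        gcongr
        exact centeredIndicator_dotProduct_self_le hS
end

section
/- Let Π be a finite projective plane of order q with point set 𝒫 and line set ℒ. Then for any S ⊆ 𝒫 and T ⊆ ℒ, |e(S,T) − (q+1)·|S|·|T|/(q²+q+1)| ≤ q^{1/2}·√(|S|·|T|), where e(S,T) is the number of pairs (p,l) ∈ S×T with p lying on l. -/
open Finset


/-- Lemma 2.4: in a projective plane of order `q` with points `P` and lines `L`,
for any `S ⊆ P` and `T ⊆ L`, the number `e(S,T)` of incident pairs `(p,l) ∈ S×T`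
satisfies `|e(S,T) - (q+1)|S||T|/(q²+q+1)| ≤ √q·√(|S||T|)`. -/
theorem stmt_14 (P L : Type*) [Membership P L] [Fintype P] [Fintype L]
    [Configuration.ProjectivePlane P L]
    (q : ℕ) (hq : Configuration.ProjectivePlane.order P L = q)
    (S : Set P) (T : Set L) :
    |(Set.ncard {pl : P × L | pl.1 ∈ S ∧ pl.2 ∈ T ∧ pl.1 ∈ pl.2} : ℝ) -
        ((q : ℝ) + 1) * S.ncard * T.ncard / ((q : ℝ) ^ 2 + (q : ℝ) + 1)| ≤
      Real.sqrt q * Real.sqrt ((S.ncard : ℝ) * T.ncard) := by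
  classical
  set s : Finset P := S.toFinset with hs
  set t : Finset L := T.toFinset with ht
  have hSn : S.ncard = s.card := Set.ncard_eq_toFinset_card' S
  have hTn : T.ncard = t.card := Set.ncard_eq_toFinset_card' T
  set E : Finset (P × L) := (s ×ˢ t).filter (fun pl => pl.1 ∈ pl.2) with hE
  have hEn : {pl : P × L | pl.1 ∈ S ∧ pl.2 ∈ T ∧ pl.1 ∈ pl.2}.ncard = E.card := by
    rw [← Set.ncard_coe_finset]
    congr 1
    ext pl
    simp [hE, hs, ht, and_assoc]
  set n : L → ℕ := fun l => (s.filter (· ∈ l)).card with hn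
  -- lines through a point
  have hline : ∀ p : P, (univ.filter (fun l : L => p ∈ l)).card = q + 1 := by
    intro p
    have h1 := Configuration.ProjectivePlane.lineCount_eq L p
    rw [hq] at h1
    rw [← h1, Configuration.lineCount, Nat.card_eq_fintype_card, Fintype.card_subtype]
  -- unique line through two points
  have hpair : ∀ p p' : P, p ≠ p' →
      (univ.filter (fun l : L => p ∈ l ∧ p' ∈ l)).card = 1 := by
    intro p p' hne
    rw [Finset.card_eq_one]
    refine ⟨Configuration.HasLines.mkLine hne, ?_⟩
    rw [Finset.eq_singleton_iff_unique_mem]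
    constructor
    · simp [Configuration.HasLines.mkLine_ax hne]
    · intro l hl
      simp only [mem_filter, mem_univ, true_and] at hl
      have := Configuration.Nondegenerate.eq_or_eq hl.1 hl.2
        (Configuration.HasLines.mkLine_ax hne).1 (Configuration.HasLines.mkLine_ax hne).2
      exact this.resolve_left hne
  -- Fact A
  have hA : E.card = ∑ l ∈ t, n l := by
    rw [hE, Finset.card_filter, Finset.sum_product_right]
    refine Finset.sum_congr rfl fun l _ => ?_
    rw [hn]
    exact (Finset.card_filter _ _).symm
  -- Fact B
  have hB : ∑ l : L, n l = (q + 1) * s.card := by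
    simp only [hn, Finset.card_filter]
    rw [Finset.sum_comm]
    have : ∀ p ∈ s, (∑ l : L, if p ∈ l then 1 else 0) = q + 1 := by
      intro p _
      rw [← hline p, Finset.card_filter]
    rw [Finset.sum_congr rfl this, Finset.sum_const, smul_eq_mul, mul_comm]
  -- Fact C
  have hm : ∀ p p' : P, (∑ l : L, if p ∈ l ∧ p' ∈ l then 1 else 0) =
      if p = p' then q + 1 else 1 := by
    intro p p'
    rw [← Finset.card_filter]
    by_cases h : p = p'
    · subst h
      rw [if_pos rfl, ← hline p]
      congr 1
      simp
    · rw [if_neg h]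
      exact hpair p p' h
  have hC : ∑ l : L, n l ^ 2 = s.card ^ 2 + q * s.card := by
    have hsq : ∀ l : L, n l ^ 2 = ∑ p ∈ s, ∑ p' ∈ s, (if p ∈ l ∧ p' ∈ l then 1 else 0) := by
      intro l
      rw [sq]
      show (s.filter (· ∈ l)).card * (s.filter (· ∈ l)).card = _
      rw [Finset.card_filter, Finset.sum_mul_sum]
      refine Finset.sum_congr rfl fun p _ => Finset.sum_congr rfl fun p' _ => ?_
      by_cases h1 : p ∈ l <;> by_cases h2 : p' ∈ l <;> simp [h1, h2]
    rw [Finset.sum_congr rfl (fun l _ => hsq l), Finset.sum_comm]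
    have step1 : ∀ p ∈ s, (∑ l : L, ∑ p' ∈ s, if p ∈ l ∧ p' ∈ l then 1 else 0)
        = s.card + q := by
      intro p hp
      rw [Finset.sum_comm, Finset.sum_congr rfl (fun p' _ => hm p p')]
      have : ∀ p' ∈ s, (if p = p' then q + 1 else 1) = (if p = p' then q else 0) + 1 := by
        intro p' _
        by_cases h : p = p' <;> simp [h]
      rw [Finset.sum_congr rfl this, Finset.sum_add_distrib, Finset.sum_ite_eq, if_pos hp,
        Finset.sum_const, smul_eq_mul, mul_one, add_comm]
    rw [Finset.sum_congr rfl step1, Finset.sum_const, smul_eq_mul, sq]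
    ring
  -- pass to the reals
  set a : ℝ := (s.card : ℝ) with ha
  set b : ℝ := (t.card : ℝ) with hb
  set Nr : ℝ := (q : ℝ) ^ 2 + (q : ℝ) + 1 with hNr
  set c : ℝ := ((q : ℝ) + 1) * a / Nr with hc
  have hNpos : (0 : ℝ) < Nr := by positivity
  have hcardL : (Fintype.card L : ℝ) = Nr := by
    rw [Configuration.ProjectivePlane.card_lines P L, hq]
    push_cast
    ring
  set f : L → ℝ := fun l => (n l : ℝ) with hf
  have hBr : ∑ l : L, f l = ((q : ℝ) + 1) * a := by
    rw [hf, ha, ← Nat.cast_sum, hB]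
    push_cast
    ring
  have hCr : ∑ l : L, f l ^ 2 = a ^ 2 + (q : ℝ) * a := by
    have : ∑ l : L, f l ^ 2 = ((∑ l : L, n l ^ 2 : ℕ) : ℝ) := by
      push_cast
      rfl
    rw [this, hC]
    push_cast
    ring
  have hvar : ∑ l : L, (f l - c) ^ 2 = (q : ℝ) * a - (q : ℝ) * a ^ 2 / Nr := by
    have expand : ∀ l ∈ (univ : Finset L), (f l - c) ^ 2 = f l ^ 2 - 2 * c * f l + c ^ 2 :=
      fun l _ => by ring
    rw [Finset.sum_congr rfl expand, Finset.sum_add_distrib, Finset.sum_sub_distrib,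
      ← Finset.mul_sum, hCr, hBr, Finset.sum_const, Finset.card_univ, nsmul_eq_mul, hcardL, hc]
    field_simp
    ring
  -- Cauchy-Schwarz
  have hCS : (∑ l ∈ t, (f l - c)) ^ 2 ≤ b * ((q : ℝ) * a - (q : ℝ) * a ^ 2 / Nr) := by
    calc (∑ l ∈ t, (f l - c)) ^ 2 ≤ (t.card : ℝ) * ∑ l ∈ t, (f l - c) ^ 2 :=
          sq_sum_le_card_mul_sum_sq
      _ ≤ (t.card : ℝ) * ∑ l : L, (f l - c) ^ 2 := by
          apply mul_le_mul_of_nonneg_left _ (by positivity)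
          exact Finset.sum_le_sum_of_subset_of_nonneg (Finset.subset_univ t)
            (fun l _ _ => sq_nonneg _)
      _ = b * ((q : ℝ) * a - (q : ℝ) * a ^ 2 / Nr) := by rw [hvar, hb]
  have hkey : (∑ l ∈ t, (f l - c)) ^ 2 ≤ (q : ℝ) * (a * b) := by
    refine hCS.trans ?_
    have h1 : (q : ℝ) * a - (q : ℝ) * a ^ 2 / Nr ≤ (q : ℝ) * a := by
      have : 0 ≤ (q : ℝ) * a ^ 2 / Nr := by positivity
      linarith
    calc b * ((q : ℝ) * a - (q : ℝ) * a ^ 2 / Nr) ≤ b * ((q : ℝ) * a) :=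
          mul_le_mul_of_nonneg_left h1 (by positivity)
      _ = (q : ℝ) * (a * b) := by ring
  have hsum : ∑ l ∈ t, (f l - c) = (E.card : ℝ) - ((q : ℝ) + 1) * a * b / Nr := by
    rw [Finset.sum_sub_distrib, Finset.sum_const, nsmul_eq_mul, ← hb, hA, hc]
    push_cast
    ring
  rw [hEn, hSn, hTn, ← ha, ← hb, ← hsum]
  calc |∑ l ∈ t, (f l - c)| = Real.sqrt ((∑ l ∈ t, (f l - c)) ^ 2) :=
        (Real.sqrt_sq_eq_abs _).symm
    _ ≤ Real.sqrt ((q : ℝ) * (a * b)) := Real.sqrt_le_sqrt hkey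
    _ = Real.sqrt q * Real.sqrt (a * b) := Real.sqrt_mul (Nat.cast_nonneg q) _
end

section
/- Let Q be a finite (left) quasifield and let A ⊆ Q\{0}. For a,b ∈ A let l(a,b) = {(x,y) ∈ Q² : y = b·x − b·a}. Then the lines l(a,b) for (a,b) ∈ A×A are pairwise distinct (so L = {l(a,b) : a,b ∈ A} has |A|² elements), and the number of incidences between the point set P = (A+A)×(A·A) and L satisfies |{(p,l) ∈ P×L : p ∈ l}| ≥ |A|³. -/
open scoped Pointwise

lemma myNcardProd {α β : Type*} (s : Set α) (t : Set β) :
    (s ×ˢ t).ncard = s.ncard * t.ncard := by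
  rw [← Nat.card_coe_set_eq, ← Nat.card_coe_set_eq, ← Nat.card_coe_set_eq,
    Nat.card_congr (Equiv.Set.prod s t), Nat.card_prod]

/-- Lemma 2.5 (Elekes-type construction): for `A ⊆ Q \ {0}`, the lines
`l(a,b) = {(x,y) : y = b·x - b·a}` for `(a,b) ∈ A×A` are pairwise distinct (so the
line set has `|A|²` elements), and the number of incidences between the point set
`P = (A+A)×(A·A)` and this line set is at least `|A|³`. -/
theorem stmt_15 {Q : Type*} [Quasifield Q] [Fintype Q]
    (A : Set Q) (hA0 : ∀ a ∈ A, a ≠ 0) :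
    (∀ a ∈ A, ∀ b ∈ A, ∀ a' ∈ A, ∀ b' ∈ A,
      {p : Q × Q | p.2 = b * p.1 - b * a} = {p : Q × Q | p.2 = b' * p.1 - b' * a'} →
      a = a' ∧ b = b') ∧
    Set.ncard {l : Set (Q × Q) | ∃ a ∈ A, ∃ b ∈ A,
        l = {p : Q × Q | p.2 = b * p.1 - b * a}} = A.ncard ^ 2 ∧
    A.ncard ^ 3 ≤ Set.ncard {pl : (Q × Q) × Set (Q × Q) |
      pl.1.1 ∈ A + A ∧ pl.1.2 ∈ A * A ∧
      (∃ a ∈ A, ∃ b ∈ A, pl.2 = {p : Q × Q | p.2 = b * p.1 - b * a}) ∧ pl.1 ∈ pl.2} := by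
  classical
  have key : ∀ a ∈ A, ∀ b ∈ A, ∀ a' ∈ A, ∀ b' ∈ A,
      {p : Q × Q | p.2 = b * p.1 - b * a} = {p : Q × Q | p.2 = b' * p.1 - b' * a'} →
      a = a' ∧ b = b' := by
    intro a ha b hb a' ha' b' hb' h
    have ha0 := hA0 a ha
    have hb'0 := hA0 b' hb'
    have h1 : ((a, (0:Q)) : Q × Q) ∈ {p : Q × Q | p.2 = b * p.1 - b * a} := by
      simp [Set.mem_setOf_eq]
    rw [h] at h1
    have h2 : b' * a = b' * a' := by
      have : (0:Q) = b' * a - b' * a' := h1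
      exact sub_eq_zero.mp this.symm
    have haa : a = a' := by
      obtain ⟨x, hx, hu⟩ := Quasifield.existsUnique_mul_left b' (b' * a') hb'0
        (Quasifield.mul_ne_zero _ _ hb'0 (hA0 a' ha'))
      exact (hu a h2).trans (hu a' rfl).symm
    refine ⟨haa, ?_⟩
    subst haa
    have h3 : ((a + 1, b) : Q × Q) ∈ {p : Q × Q | p.2 = b * p.1 - b * a} := by
      show b = b * (a + 1) - b * a
      rw [Quasifield.left_distrib, Quasifield.mul_one, add_sub_cancel_left]
    rw [h] at h3
    have h4 : b = b' * (a + 1) - b' * a := h3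
    rw [Quasifield.left_distrib, Quasifield.mul_one, add_sub_cancel_left] at h4
    exact h4
  refine ⟨key, ?_, ?_⟩
  · have hset : {l : Set (Q × Q) | ∃ a ∈ A, ∃ b ∈ A,
        l = {p : Q × Q | p.2 = b * p.1 - b * a}}
        = (fun ab : Q × Q => {p : Q × Q | p.2 = ab.2 * p.1 - ab.2 * ab.1}) '' (A ×ˢ A) := by
      ext l
      simp only [Set.mem_setOf_eq, Set.mem_image, Set.mem_prod, Prod.exists]
      constructor
      · rintro ⟨a, ha, b, hb, rfl⟩; exact ⟨a, b, ⟨ha, hb⟩, rfl⟩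
      · rintro ⟨a, b, ⟨ha, hb⟩, rfl⟩; exact ⟨a, ha, b, hb, rfl⟩
    rw [hset, Set.ncard_image_of_injOn, myNcardProd, sq]
    rintro ⟨a, b⟩ hab ⟨a', b'⟩ hab' heq
    obtain ⟨h1, h2⟩ := key a hab.1 b hab.2 a' hab'.1 b' hab'.2 heq
    simp [Prod.ext_iff, h1, h2]
  · set S := {pl : (Q × Q) × Set (Q × Q) |
      pl.1.1 ∈ A + A ∧ pl.1.2 ∈ A * A ∧
      (∃ a ∈ A, ∃ b ∈ A, pl.2 = {p : Q × Q | p.2 = b * p.1 - b * a}) ∧ pl.1 ∈ pl.2} with hS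
    set g : Q × Q × Q → (Q × Q) × Set (Q × Q) :=
      fun t => ((t.2.2 + t.1, t.2.1 * t.2.2),
        {p : Q × Q | p.2 = t.2.1 * p.1 - t.2.1 * t.1}) with hg
    have hsub : g '' (A ×ˢ A ×ˢ A) ⊆ S := by
      rintro _ ⟨⟨a, b, c⟩, ⟨ha, hb, hc⟩, rfl⟩
      refine ⟨Set.add_mem_add hc ha, Set.mul_mem_mul hb hc, ⟨a, ha, b, hb, rfl⟩, ?_⟩
      show b * c = b * (c + a) - b * a
      rw [Quasifield.left_distrib, add_sub_cancel_right]
    have hinj : Set.InjOn g (A ×ˢ A ×ˢ A) := by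
      rintro ⟨a, b, c⟩ ⟨ha, hb, hc⟩ ⟨a', b', c'⟩ ⟨ha', hb', hc'⟩ heq
      simp only [hg, Prod.mk.injEq] at heq
      obtain ⟨⟨hx, hy⟩, hl⟩ := heq
      obtain ⟨h1, h2⟩ := key a ha b hb a' ha' b' hb' hl
      subst h1; subst h2
      have : c = c' := by
        have := hx
        exact add_right_cancel this
      simp [this]
    calc A.ncard ^ 3 = (A ×ˢ A ×ˢ A).ncard := by
            rw [myNcardProd, myNcardProd]; ring
      _ = (g '' (A ×ˢ A ×ˢ A)).ncard := (Set.ncard_image_of_injOn hinj).symm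
      _ ≤ S.ncard := Set.ncard_le_ncard hsub (Set.toFinite S)
end
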